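/- arXiv:1112.0670 — 5 statements merged into one kernel-verified Lean document; each statement's English description precedes it below -/
import Mathlib

section
/- Let α = ({D_g}_{g∈G}, {α_g}_{g∈G}) be a partial action of a groupoid G on a ring R. Then α is global if and only if D_g = D_{r(g)} for all g ∈ G. -/
universe u

/-- A groupoid in the algebraic sense of Lawson: a non-empty set `G` with a
partially defined binary operation (here modeled by a total operation `mul`
whose value is only constrained when it is defined, i.e. when `d g = r h`),
an inversion `inv`, and domain/range maps `d`, `r`. -/
structure AlgGroupoid (G : Type u) where
  mul : G → G → G
  inv : G → G
  d : G → G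
  r : G → G
  mul_assoc' : ∀ g h l, d g = r h → d h = r l → mul (mul g h) l = mul g (mul h l)
  mul_d : ∀ g, mul g (d g) = g
  r_mul : ∀ g, mul (r g) g = g
  inv_mul : ∀ g, mul (inv g) g = d g
  mul_inv : ∀ g, mul g (inv g) = r g
  d_mul : ∀ g h, d g = r h → d (mul g h) = d h
  r_mul' : ∀ g h, d g = r h → r (mul g h) = r g
  d_inv : ∀ g, d (inv g) = r g
  r_inv : ∀ g, r (inv g) = d g
  inv_inv : ∀ g, inv (inv g) = g
  d_d : ∀ g, d (d g) = d g
  r_d : ∀ g, r (d g) = d g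
  d_r : ∀ g, d (r g) = r g
  r_r : ∀ g, r (r g) = r g

/-- `e` is an identity element of the groupoid `𝔾`, i.e. an element of `G₀`. -/
def AlgGroupoid.isId {G : Type u} (𝔾 : AlgGroupoid G) (e : G) : Prop := 𝔾.d e = e

instance {G : Type u} [DecidableEq G] (𝔾 : AlgGroupoid G) (e : G) : Decidable (𝔾.isId e) :=
  inferInstanceAs (Decidable (𝔾.d e = e))

/-- `D` is a two-sided ideal of `E` (both being subsets of an ambient
non-unital ring `T`). -/
structure IsIdealIn {T : Type u} [NonUnitalRing T] (D E : Set T) : Prop where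
  subset : D ⊆ E
  zero_mem : (0 : T) ∈ D
  add_mem : ∀ ⦃x y : T⦄, x ∈ D → y ∈ D → x + y ∈ D
  neg_mem : ∀ ⦃x : T⦄, x ∈ D → -x ∈ D
  mul_mem_left : ∀ ⦃x y : T⦄, x ∈ E → y ∈ D → x * y ∈ D
  mul_mem_right : ∀ ⦃x y : T⦄, x ∈ D → y ∈ E → x * y ∈ D

/-- `u` is a (two-sided) multiplicative identity element of the subset `D`. -/
def IsIdentityElem {T : Type u} [NonUnitalRing T] (u : T) (D : Set T) : Prop :=
  u ∈ D ∧ ∀ x ∈ D, u * x = x ∧ x * u = x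

/-- A partial action `α = ({D_g}, {α_g})` of a groupoid `𝔾` on the ring whose
carrier is the subset `R` of the ambient non-unital ring `T` (take
`R = Set.univ` for a partial action on `T` itself).  For each `g`, `D (r g)`
is an ideal of `R`, `D g` is an ideal of `D (r g)` and `act g` restricts to a
ring isomorphism from `D (inv g)` onto `D g`; moreover `act e` is the identity
of `D e` for identities `e`, and for composable `g, h` the map `act (mul g h)`
extends `act g ∘ act h` (whose domain is `(act h)⁻¹ (D (inv g) ∩ D h)`). -/
structure PartialGroupoidAction {G : Type u} (𝔾 : AlgGroupoid G) (T : Type u)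
    [NonUnitalRing T] (R : Set T) where
  D : G → Set T
  act : G → T → T
  ideal_r : ∀ g, IsIdealIn (D (𝔾.r g)) R
  ideal : ∀ g, IsIdealIn (D g) (D (𝔾.r g))
  bijOn : ∀ g, Set.BijOn (act g) (D (𝔾.inv g)) (D g)
  map_add : ∀ g, ∀ x ∈ D (𝔾.inv g), ∀ y ∈ D (𝔾.inv g), act g (x + y) = act g x + act g y
  map_mul : ∀ g, ∀ x ∈ D (𝔾.inv g), ∀ y ∈ D (𝔾.inv g), act g (x * y) = act g x * act g y
  act_id : ∀ e, 𝔾.isId e → ∀ x ∈ D e, act e x = x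
  dom_cond : ∀ g h, 𝔾.d g = 𝔾.r h → ∀ x ∈ D (𝔾.inv h), act h x ∈ D (𝔾.inv g) →
    x ∈ D (𝔾.inv (𝔾.mul g h))
  comp_cond : ∀ g h, 𝔾.d g = 𝔾.r h → ∀ x ∈ D (𝔾.inv h), act h x ∈ D (𝔾.inv g) →
    act g (act h x) = act (𝔾.mul g h) x

/-- The partial action `α` is global if, for all composable `g, h`, the
composite `α_g ∘ α_h` (taken on its largest possible domain) coincides with
`α_{gh}`; since both maps always agree on the domain of the composite, this
amounts to the equality of the two domains. -/
def PartialGroupoidAction.IsGlobal {G : Type u} {𝔾 : AlgGroupoid G} {T : Type u}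
    [NonUnitalRing T] {R : Set T} (α : PartialGroupoidAction 𝔾 T R) : Prop :=
  ∀ g h, 𝔾.d g = 𝔾.r h →
    {x | x ∈ α.D (𝔾.inv h) ∧ α.act h x ∈ α.D (𝔾.inv g)} = α.D (𝔾.inv (𝔾.mul g h))

/-- **Lemma 1.1(i)**: a partial groupoid action `α` is global if and only if
`D_g = D_{r(g)}` for all `g ∈ G`. -/
theorem partial_action_isGlobal_iff {G : Type u} [Nonempty G] (𝔾 : AlgGroupoid G)
    {R : Type u} [NonUnitalRing R] (α : PartialGroupoidAction 𝔾 R (Set.univ : Set R)) :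
    α.IsGlobal ↔ ∀ g : G, α.D g = α.D (𝔾.r g) := by
  have inv_id : ∀ e : G, 𝔾.isId e → 𝔾.inv e = e := by
    intro e he
    have h1 : 𝔾.mul (𝔾.inv e) (𝔾.d (𝔾.inv e)) = 𝔾.inv e := 𝔾.mul_d _
    rw [𝔾.d_inv] at h1
    have hre : 𝔾.r e = e := by
      rw [← he]; exact 𝔾.r_d e
    rw [hre] at h1
    rw [𝔾.inv_mul e, he] at h1
    exact h1.symm
  constructor
  · intro hglob g
    have key : ∀ g : G, α.D (𝔾.inv g) = α.D (𝔾.d g) := by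
      intro g
      have h := hglob (𝔾.inv g) g (𝔾.d_inv g)
      have hinv : 𝔾.inv (𝔾.mul (𝔾.inv g) g) = 𝔾.d g := by
        rw [𝔾.inv_mul g, inv_id (𝔾.d g) (𝔾.d_d g)]
      rw [hinv] at h
      rw [← h]
      ext x
      simp only [Set.mem_setOf_eq]
      constructor
      · intro hx
        refine ⟨hx, ?_⟩
        rw [𝔾.inv_inv]
        exact (α.bijOn g).mapsTo hx
      · rintro ⟨hx, -⟩; exact hx
    have := key (𝔾.inv g)
    rwa [𝔾.inv_inv, 𝔾.d_inv] at this
  · intro hD g h hgh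
    have hDh : α.D (𝔾.inv h) = α.D (𝔾.d h) := by
      rw [hD (𝔾.inv h), 𝔾.r_inv]
    have hDg : α.D (𝔾.inv g) = α.D (𝔾.r h) := by
      rw [hD (𝔾.inv g), 𝔾.r_inv, hgh]
    have hDgh : α.D (𝔾.inv (𝔾.mul g h)) = α.D (𝔾.d h) := by
      rw [hD (𝔾.inv (𝔾.mul g h)), 𝔾.r_inv, 𝔾.d_mul g h hgh]
    ext x
    simp only [Set.mem_setOf_eq, hDgh, ← hDh]
    constructor
    · rintro ⟨hx, -⟩; exact hx
    · intro hx
      refine ⟨hx, ?_⟩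
      rw [hDg, ← hD h]
      exact (α.bijOn h).mapsTo hx
end

section
/- Let α = ({D_g}_{g∈G}, {α_g}_{g∈G}) be a partial action of a groupoid G on a ring R such that D_e is a unital ring for each e ∈ G₀. Then α admits a globalization if and only if each ideal D_g, g ∈ G, is a unital ring (i.e. has an identity element). -/
universe u

/-- The global action `β` of `𝔾` on `T` is a globalization (enveloping action)
of the partial action `α` of `𝔾` on `R`, witnessed by the family of ring
monomorphisms `φ e : D_e → E_e` (`e` an identity of `𝔾`), where `E_g = β.D g`. -/
structure Globalization {G : Type u} (𝔾 : AlgGroupoid G) {R : Type u} [NonUnitalRing R]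
    (α : PartialGroupoidAction 𝔾 R (Set.univ : Set R)) {T : Type u} [NonUnitalRing T]
    (β : PartialGroupoidAction 𝔾 T (Set.univ : Set T)) where
  global : β.IsGlobal
  φ : G → R → T
  φ_injOn : ∀ e, 𝔾.isId e → Set.InjOn (φ e) (α.D e)
  φ_add : ∀ e, 𝔾.isId e → ∀ x ∈ α.D e, ∀ y ∈ α.D e, φ e (x + y) = φ e x + φ e y
  φ_mul : ∀ e, 𝔾.isId e → ∀ x ∈ α.D e, ∀ y ∈ α.D e, φ e (x * y) = φ e x * φ e y
  φ_mem : ∀ e, 𝔾.isId e → ∀ x ∈ α.D e, φ e x ∈ β.D e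
  φ_ideal : ∀ e, 𝔾.isId e → IsIdealIn (φ e '' α.D e) (β.D e)
  compat_D : ∀ g, φ (𝔾.r g) '' α.D g
      = (φ (𝔾.r g) '' α.D (𝔾.r g)) ∩ (β.act g '' (φ (𝔾.d g) '' α.D (𝔾.d g)))
  compat_act : ∀ g, ∀ a ∈ α.D (𝔾.inv g), β.act g (φ (𝔾.d g) a) = φ (𝔾.r g) (α.act g a)
  spans : ∀ g, β.D g
      = ↑(AddSubgroup.closure
          (⋃ h ∈ {h : G | 𝔾.r h = 𝔾.r g}, β.act h '' (φ (𝔾.d h) '' α.D (𝔾.d h))))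

/-- Bundled form: some ring `T` together with a global action of `𝔾` on it
which is a globalization of `α`. -/
structure GlobalizationOf {G : Type u} (𝔾 : AlgGroupoid G) {R : Type u} [NonUnitalRing R]
    (α : PartialGroupoidAction 𝔾 R (Set.univ : Set R)) : Type (u + 1) where
  T : Type u
  [ringT : NonUnitalRing T]
  β : PartialGroupoidAction 𝔾 T (Set.univ : Set T)
  glob : Globalization 𝔾 α β


namespace AlgGroupoid

variable {G : Type u} (𝔾 : AlgGroupoid G)

lemma isId_d (g : G) : 𝔾.isId (𝔾.d g) := 𝔾.d_d g
lemma isId_r (g : G) : 𝔾.isId (𝔾.r g) := 𝔾.d_r g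

lemma r_of_isId {e : G} (he : 𝔾.isId e) : 𝔾.r e = e := by
  conv_lhs => rw [← he]
  rw [𝔾.r_d, he]

lemma inv_of_isId {e : G} (he : 𝔾.isId e) : 𝔾.inv e = e := by
  have h1 : 𝔾.mul (𝔾.inv e) e = 𝔾.d e := 𝔾.inv_mul e
  have h2 : 𝔾.mul (𝔾.inv e) (𝔾.d (𝔾.inv e)) = 𝔾.inv e := 𝔾.mul_d (𝔾.inv e)
  rw [𝔾.d_inv, 𝔾.r_of_isId he] at h2
  rw [← h2, h1, he]

lemma mul_r_inv (g : G) : 𝔾.mul (𝔾.inv g) (𝔾.r g) = 𝔾.inv g := by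
  have := 𝔾.mul_d (𝔾.inv g); rwa [𝔾.d_inv] at this

lemma inv_unique {x g : G} (hx : 𝔾.d x = 𝔾.r g) (hmul : 𝔾.mul x g = 𝔾.d g) :
    x = 𝔾.inv g := by
  have h1 : x = 𝔾.mul x (𝔾.mul g (𝔾.inv g)) := by rw [𝔾.mul_inv, ← hx, 𝔾.mul_d]
  rw [← 𝔾.mul_assoc' x g (𝔾.inv g) hx (𝔾.r_inv g).symm, hmul] at h1
  rw [h1, ← 𝔾.r_inv g, 𝔾.r_mul]

lemma inv_mul' {g h : G} (hgh : 𝔾.d g = 𝔾.r h) :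
    𝔾.inv (𝔾.mul g h) = 𝔾.mul (𝔾.inv h) (𝔾.inv g) := by
  have hd : 𝔾.d (𝔾.inv h) = 𝔾.r (𝔾.inv g) := by rw [𝔾.d_inv, 𝔾.r_inv, hgh]
  refine (𝔾.inv_unique ?_ ?_).symm
  · rw [𝔾.d_mul _ _ hd, 𝔾.d_inv, 𝔾.r_mul' _ _ hgh]
  · have e1 : 𝔾.mul (𝔾.mul (𝔾.inv h) (𝔾.inv g)) g = 𝔾.inv h := by
      rw [𝔾.mul_assoc' _ _ _ hd (by rw [𝔾.d_inv]), 𝔾.inv_mul, hgh]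
      have := 𝔾.mul_d (𝔾.inv h); rwa [𝔾.d_inv] at this
    rw [← 𝔾.mul_assoc' _ g h (by rw [𝔾.d_mul _ _ hd, 𝔾.d_inv]) hgh, e1,
      𝔾.inv_mul, 𝔾.d_mul _ _ hgh]

lemma cancel_left {g h : G} (hgh : 𝔾.r g = 𝔾.r h) :
    𝔾.mul g (𝔾.mul (𝔾.inv g) h) = 𝔾.mul h (𝔾.d h) := by
  rw [← 𝔾.mul_assoc' g (𝔾.inv g) h (𝔾.r_inv g).symm (by rw [𝔾.d_inv, hgh]),
    𝔾.mul_inv, hgh, 𝔾.r_mul, 𝔾.mul_d]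

lemma mul_cancel_left {g h : G} (hgh : 𝔾.r g = 𝔾.r h) :
    𝔾.mul g (𝔾.mul (𝔾.inv g) h) = h := by rw [𝔾.cancel_left hgh, 𝔾.mul_d]

lemma mul_cancel_left' {g h : G} (hgh : 𝔾.d g = 𝔾.r h) :
    𝔾.mul (𝔾.inv g) (𝔾.mul g h) = h := by
  have := 𝔾.mul_cancel_left (g := 𝔾.inv g) (h := h) (by rw [𝔾.r_inv, hgh])
  rwa [𝔾.inv_inv] at this

lemma r_invmul {g h : G} (hgh : 𝔾.r g = 𝔾.r h) :
    𝔾.r (𝔾.mul (𝔾.inv g) h) = 𝔾.d g := by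
  rw [𝔾.r_mul' _ _ (by rw [𝔾.d_inv, hgh]), 𝔾.r_inv]

lemma d_invmul {g h : G} (hgh : 𝔾.r g = 𝔾.r h) :
    𝔾.d (𝔾.mul (𝔾.inv g) h) = 𝔾.d h := 𝔾.d_mul _ _ (by rw [𝔾.d_inv, hgh])

lemma inv_invmul {g h : G} (hgh : 𝔾.r g = 𝔾.r h) :
    𝔾.inv (𝔾.mul (𝔾.inv g) h) = 𝔾.mul (𝔾.inv h) g := by
  rw [𝔾.inv_mul' (by rw [𝔾.d_inv, hgh]), 𝔾.inv_inv]

lemma triple {h k l : G} (h1 : 𝔾.r h = 𝔾.r k) (h2 : 𝔾.r k = 𝔾.r l) :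
    𝔾.mul (𝔾.mul (𝔾.inv h) k) (𝔾.mul (𝔾.inv k) l) = 𝔾.mul (𝔾.inv h) l := by
  rw [𝔾.mul_assoc' (𝔾.inv h) k (𝔾.mul (𝔾.inv k) l) (by rw [𝔾.d_inv, h1])
    (by rw [𝔾.r_invmul h2]), 𝔾.mul_cancel_left h2]

lemma id_mul {e h : G} (_he : 𝔾.isId e) (hr : 𝔾.r h = e) : 𝔾.mul e h = h := by
  rw [← hr, 𝔾.r_mul]

end AlgGroupoid

section PA

open Set

variable {G : Type u} {𝔾 : AlgGroupoid G} {R : Type u} [NonUnitalRing R]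
  {α : PartialGroupoidAction 𝔾 R (Set.univ : Set R)} {u : G → R}

lemma pa_zero_mem (g : G) : (0 : R) ∈ α.D g := (α.ideal g).zero_mem

lemma pa_subset (g : G) : α.D g ⊆ α.D (𝔾.r g) := (α.ideal g).subset

lemma pa_mapsTo {g : G} {x : R} (hx : x ∈ α.D (𝔾.inv g)) : α.act g x ∈ α.D g :=
  (α.bijOn g).mapsTo hx

lemma pa_act_zero (g : G) : α.act g 0 = 0 := by
  have h0 : (0 : R) ∈ α.D (𝔾.inv g) := pa_zero_mem _
  have h := α.map_add g 0 h0 0 h0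
  rw [add_zero] at h
  exact (left_eq_add.mp h)

lemma pa_left_inv {g : G} {x : R} (hx : x ∈ α.D (𝔾.inv g)) :
    α.act (𝔾.inv g) (α.act g x) = x := by
  have h1 : α.act g x ∈ α.D (𝔾.inv (𝔾.inv g)) := by rw [𝔾.inv_inv]; exact pa_mapsTo hx
  have h2 := α.comp_cond (𝔾.inv g) g (by rw [𝔾.d_inv]) x hx h1
  have h3 : x ∈ α.D (𝔾.d g) := by have := pa_subset (𝔾.inv g) hx; rwa [𝔾.r_inv] at this
  rw [h2, 𝔾.inv_mul]
  exact α.act_id _ (𝔾.isId_d g) x h3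

lemma pa_right_inv {g : G} {y : R} (hy : y ∈ α.D g) :
    α.act g (α.act (𝔾.inv g) y) = y := by
  have hy' : y ∈ α.D (𝔾.inv (𝔾.inv g)) := by rwa [𝔾.inv_inv]
  have := pa_left_inv hy'
  rwa [𝔾.inv_inv] at this

lemma pa_inv_mapsTo {g : G} {y : R} (hy : y ∈ α.D g) : α.act (𝔾.inv g) y ∈ α.D (𝔾.inv g) :=
  pa_mapsTo (g := 𝔾.inv g) (by rwa [𝔾.inv_inv])

variable (hu : ∀ g, IsIdentityElem (u g) (α.D g))
include hu

lemma pa_D_ideal (g : G) : IsIdealIn (α.D g) (Set.univ : Set R) where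
  subset := Set.subset_univ _
  zero_mem := pa_zero_mem g
  add_mem := (α.ideal g).add_mem
  neg_mem := (α.ideal g).neg_mem
  mul_mem_left := by
    intro x y _ hy
    have h1 : x * u g ∈ α.D (𝔾.r g) :=
      (α.ideal_r g).mul_mem_left (Set.mem_univ x) ((α.ideal g).subset (hu g).1)
    have h2 : (x * u g) * y ∈ α.D g := (α.ideal g).mul_mem_left h1 hy
    rwa [mul_assoc, ((hu g).2 y hy).1] at h2
  mul_mem_right := by
    intro x y hx _
    have h1 : u g * y ∈ α.D (𝔾.r g) :=
      (α.ideal_r g).mul_mem_right ((α.ideal g).subset (hu g).1) (Set.mem_univ y)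
    have h2 : x * (u g * y) ∈ α.D g := (α.ideal g).mul_mem_right hx h1
    rwa [← mul_assoc, ((hu g).2 x hx).2] at h2

lemma pa_u_central (g : G) (s : R) : u g * s = s * u g := by
  have hD := pa_D_ideal hu g
  have h1 : u g * s ∈ α.D g := hD.mul_mem_right (hu g).1 (Set.mem_univ s)
  have h2 : s * u g ∈ α.D g := hD.mul_mem_left (Set.mem_univ s) (hu g).1
  have e1 : (u g * s) * u g = u g * s := ((hu g).2 _ h1).2
  have e2 : u g * (s * u g) = s * u g := ((hu g).2 _ h2).1
  rw [← e1, mul_assoc, e2]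

omit hu

lemma pa_img_mem {g h : G} {x : R} (hgh : 𝔾.d g = 𝔾.r h) (hx1 : x ∈ α.D (𝔾.inv g))
    (hx2 : x ∈ α.D h) :
    α.act g x ∈ α.D g ∧ α.act g x ∈ α.D (𝔾.mul g h) := by
  refine ⟨pa_mapsTo hx1, ?_⟩
  have hz : α.act (𝔾.inv h) x ∈ α.D (𝔾.inv h) := pa_inv_mapsTo hx2
  have hact : α.act h (α.act (𝔾.inv h) x) = x := pa_right_inv hx2
  have h1 := α.comp_cond g h hgh _ hz (by rw [hact]; exact hx1)
  rw [hact] at h1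
  have h2 := α.dom_cond g h hgh _ hz (by rw [hact]; exact hx1)
  rw [h1]
  exact pa_mapsTo h2

lemma pa_preimg_mem {g h : G} {y : R} (hgh : 𝔾.d g = 𝔾.r h) (hy1 : y ∈ α.D g)
    (hy2 : y ∈ α.D (𝔾.mul g h)) :
    α.act (𝔾.inv g) y ∈ α.D (𝔾.inv g) ∧ α.act (𝔾.inv g) y ∈ α.D h := by
  refine ⟨pa_inv_mapsTo hy1, ?_⟩
  set p := 𝔾.mul g h with hp
  have hx' : α.act (𝔾.inv p) y ∈ α.D (𝔾.inv p) := pa_inv_mapsTo hy2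
  have hact : α.act p (α.act (𝔾.inv p) y) = y := pa_right_inv hy2
  have hcond : 𝔾.d (𝔾.inv g) = 𝔾.r p := by rw [𝔾.d_inv, hp, 𝔾.r_mul' _ _ hgh]
  have hmem : α.act p (α.act (𝔾.inv p) y) ∈ α.D (𝔾.inv (𝔾.inv g)) := by
    rw [hact, 𝔾.inv_inv]; exact hy1
  have h1 := α.comp_cond (𝔾.inv g) p hcond _ hx' hmem
  have h2 := α.dom_cond (𝔾.inv g) p hcond _ hx' hmem
  have hmulp : 𝔾.mul (𝔾.inv g) p = h := 𝔾.mul_cancel_left' hgh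
  rw [hact, hmulp] at h1
  rw [hmulp] at h2
  rw [h1]
  exact pa_mapsTo h2

include hu

lemma pa_unit_mul_mem_left {g : G} (s : R) : s * u g ∈ α.D g :=
  (pa_D_ideal hu g).mul_mem_left (Set.mem_univ s) (hu g).1

lemma pa_unit_mul_mem_right {g : G} (s : R) : u g * s ∈ α.D g :=
  (pa_D_ideal hu g).mul_mem_right (hu g).1 (Set.mem_univ s)

lemma pa_unit_image {g k : G} (hgk : 𝔾.d g = 𝔾.r k) :
    α.act g (u (𝔾.inv g) * u k) = u g * u (𝔾.mul g k) := by
  have hmi : u (𝔾.inv g) * u k ∈ α.D (𝔾.inv g) := pa_unit_mul_mem_right hu _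
  have hmk : u (𝔾.inv g) * u k ∈ α.D k := pa_unit_mul_mem_left hu _
  have hw1 := pa_img_mem hgk hmi hmk
  have hw2g : u g * u (𝔾.mul g k) ∈ α.D g := pa_unit_mul_mem_right hu _
  have hw2p : u g * u (𝔾.mul g k) ∈ α.D (𝔾.mul g k) := pa_unit_mul_mem_left hu _
  set w2 := u g * u (𝔾.mul g k) with hw2def
  -- w1 * w2 = w2
  have hx := pa_preimg_mem hgk hw2g hw2p
  have hw2act : α.act g (α.act (𝔾.inv g) w2) = w2 := pa_right_inv hw2g
  have e1 : (u (𝔾.inv g) * u k) * α.act (𝔾.inv g) w2 = α.act (𝔾.inv g) w2 := by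
    rw [mul_assoc, ((hu k).2 _ hx.2).1, ((hu (𝔾.inv g)).2 _ hx.1).1]
  have eA : α.act g (u (𝔾.inv g) * u k) * w2 = w2 := by
    conv_lhs => rw [← hw2act]
    rw [← α.map_mul g _ hmi _ hx.1, e1, hw2act]
  -- w1 * w2 = w1
  have eB : α.act g (u (𝔾.inv g) * u k) * w2 = α.act g (u (𝔾.inv g) * u k) := by
    rw [hw2def, ← mul_assoc, ((hu g).2 _ hw1.1).2, ((hu (𝔾.mul g k)).2 _ hw1.2).2]
  rw [← eB, eA]

lemma pa_act_unit {g k : G} {a : R} (hgk : 𝔾.d g = 𝔾.r k) (ha : a ∈ α.D (𝔾.inv g)) :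
    α.act g (a * u k) = α.act g a * u (𝔾.mul g k) := by
  have e0 : a * u k = a * (u (𝔾.inv g) * u k) := by
    rw [← mul_assoc, ((hu (𝔾.inv g)).2 a ha).2]
  have hm : u (𝔾.inv g) * u k ∈ α.D (𝔾.inv g) := pa_unit_mul_mem_right hu _
  rw [e0, α.map_mul g a ha _ hm, pa_unit_image hu hgk, ← mul_assoc,
    ((hu g).2 _ (pa_mapsTo ha)).2]

lemma pa_key {g h : G} {a : R} (hgh : 𝔾.r g = 𝔾.r h) (ha : a ∈ α.D (𝔾.inv g)) :
    α.act (𝔾.inv h) (α.act g a * u h)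
      = α.act (𝔾.mul (𝔾.inv h) g) (a * u (𝔾.mul (𝔾.inv g) h)) := by
  set k := 𝔾.mul (𝔾.inv g) h with hk
  have hgk : 𝔾.d g = 𝔾.r k := by rw [hk, 𝔾.r_invmul hgh]
  have hmulgk : 𝔾.mul g k = h := 𝔾.mul_cancel_left hgh
  have e1 : α.act g (a * u k) = α.act g a * u h := by
    rw [pa_act_unit hu hgk ha, hmulgk]
  have hm : a * u k ∈ α.D (𝔾.inv g) := (pa_D_ideal hu (𝔾.inv g)).mul_mem_right ha (Set.mem_univ _)
  have hcond : 𝔾.d (𝔾.inv h) = 𝔾.r g := by rw [𝔾.d_inv, hgh]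
  have hmem : α.act g (a * u k) ∈ α.D (𝔾.inv (𝔾.inv h)) := by
    rw [𝔾.inv_inv, e1]
    exact pa_unit_mul_mem_left hu _
  have h2 := α.comp_cond (𝔾.inv h) g hcond _ hm hmem
  rw [e1] at h2
  exact h2

end PA

section PA2
variable {G : Type u} {𝔾 : AlgGroupoid G} {R : Type u} [NonUnitalRing R]
  {α : PartialGroupoidAction 𝔾 R (Set.univ : Set R)}

lemma pa_act_neg {g : G} {x : R} (hx : x ∈ α.D (𝔾.inv g)) :
    α.act g (-x) = - α.act g x := by
  have hnx : -x ∈ α.D (𝔾.inv g) := (α.ideal (𝔾.inv g)).neg_mem hx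
  have h := α.map_add g x hx (-x) hnx
  rw [add_neg_cancel, pa_act_zero] at h
  exact (eq_neg_of_add_eq_zero_right h.symm)

end PA2

section Construction

open Set

variable {G : Type u} (𝔾 : AlgGroupoid G) {R : Type u} [NonUnitalRing R]
  (α : PartialGroupoidAction 𝔾 R (Set.univ : Set R)) (u : G → R)

open Classical in
/-- The embedding-candidate `φ_e` at the level of functions `G → R`. -/
noncomputable def phiF (e : G) (a : R) : G → R :=
  fun h => if 𝔾.r h = e then α.act (𝔾.inv h) (a * u h) else 0

open Classical in
/-- The global-action candidate at the level of functions `G → R`. -/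
noncomputable def bactF (g : G) (f : G → R) : G → R :=
  fun h => if 𝔾.r h = 𝔾.r g then f (𝔾.mul (𝔾.inv g) h) else 0

/-- Generators attached to the class of `r g`. -/
def genSet (g : G) : Set (G → R) :=
  ⋃ k ∈ {k : G | 𝔾.r k = 𝔾.r g},
    bactF 𝔾 k '' (phiF 𝔾 α u (𝔾.d k) '' α.D (𝔾.d k))

/-- All generators. -/
def gensAll : Set (G → R) :=
  ⋃ k : G, bactF 𝔾 k '' (phiF 𝔾 α u (𝔾.d k) '' α.D (𝔾.d k))

noncomputable def SFgrp (g : G) : AddSubgroup (G → R) :=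
  AddSubgroup.closure (genSet 𝔾 α u g)

noncomputable def Agrp : AddSubgroup (G → R) :=
  AddSubgroup.closure (gensAll 𝔾 α u)

variable {𝔾 α u}

lemma phiF_apply_pos {e h : G} (hr : 𝔾.r h = e) (a : R) :
    phiF 𝔾 α u e a h = α.act (𝔾.inv h) (a * u h) := if_pos hr

lemma phiF_apply_neg {e h : G} (hr : ¬ 𝔾.r h = e) (a : R) :
    phiF 𝔾 α u e a h = 0 := if_neg hr

lemma bactF_apply_pos {g h : G} (hr : 𝔾.r h = 𝔾.r g) (f : G → R) :
    bactF 𝔾 g f h = f (𝔾.mul (𝔾.inv g) h) := if_pos hr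

lemma bactF_apply_neg {g h : G} (hr : ¬ 𝔾.r h = 𝔾.r g) (f : G → R) :
    bactF 𝔾 g f h = 0 := if_neg hr

lemma genApply {k h : G} (hr : 𝔾.r h = 𝔾.r k) (a : R) :
    bactF 𝔾 k (phiF 𝔾 α u (𝔾.d k) a) h
      = α.act (𝔾.mul (𝔾.inv h) k) (a * u (𝔾.mul (𝔾.inv k) h)) := by
  rw [bactF_apply_pos hr, phiF_apply_pos (𝔾.r_invmul hr.symm), 𝔾.inv_invmul hr.symm]

lemma genApply_ne {k h : G} (hr : ¬ 𝔾.r h = 𝔾.r k) (a : R) :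
    bactF 𝔾 k (phiF 𝔾 α u (𝔾.d k) a) h = 0 := bactF_apply_neg hr _

lemma bactF_add (g : G) (f₁ f₂ : G → R) :
    bactF 𝔾 g (f₁ + f₂) = bactF 𝔾 g f₁ + bactF 𝔾 g f₂ := by
  funext h
  simp only [bactF, Pi.add_apply]
  split <;> simp

lemma bactF_neg (g : G) (f : G → R) :
    bactF 𝔾 g (-f) = -(bactF 𝔾 g f) := by
  funext h
  simp only [bactF, Pi.neg_apply]
  split <;> simp

lemma bactF_zero (g : G) : bactF 𝔾 g (0 : G → R) = 0 := by
  funext h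
  simp only [bactF, Pi.zero_apply]
  split <;> simp

lemma bactF_mul (g : G) (f₁ f₂ : G → R) :
    bactF 𝔾 g (f₁ * f₂) = bactF 𝔾 g f₁ * bactF 𝔾 g f₂ := by
  funext h
  simp only [bactF, Pi.mul_apply]
  split <;> simp

lemma bact_comp {g h : G} (hgh : 𝔾.d g = 𝔾.r h) (f : G → R) :
    bactF 𝔾 g (bactF 𝔾 h f) = bactF 𝔾 (𝔾.mul g h) f := by
  funext m
  by_cases hm : 𝔾.r m = 𝔾.r g
  · rw [bactF_apply_pos hm, bactF_apply_pos (by rw [𝔾.r_invmul hm.symm, hgh]),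
      bactF_apply_pos (by rw [𝔾.r_mul' _ _ hgh]; exact hm)]
    congr 1
    rw [𝔾.inv_mul' hgh,
      𝔾.mul_assoc' _ _ _ (by rw [𝔾.d_inv, 𝔾.r_inv, hgh]) (by rw [𝔾.d_inv]; exact hm.symm)]
  · rw [bactF_apply_neg hm, bactF_apply_neg (by rw [𝔾.r_mul' _ _ hgh]; exact hm)]

lemma bact_gen_ne {g k : G} (hc : ¬ 𝔾.d g = 𝔾.r k) (f : G → R) :
    bactF 𝔾 g (bactF 𝔾 k f) = 0 := by
  funext h
  by_cases hh : 𝔾.r h = 𝔾.r g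
  · rw [bactF_apply_pos hh, bactF_apply_neg (by rw [𝔾.r_invmul hh.symm]; exact hc)]
    rfl
  · rw [bactF_apply_neg hh]
    rfl

lemma phiF_eq_bact_id {e : G} (he : 𝔾.isId e) (a : R) :
    bactF 𝔾 e (phiF 𝔾 α u e a) = phiF 𝔾 α u e a := by
  funext h
  by_cases hh : 𝔾.r h = e
  · rw [bactF_apply_pos (by rw [𝔾.r_of_isId he]; exact hh), 𝔾.inv_of_isId he,
      𝔾.id_mul he hh]
  · rw [bactF_apply_neg (by rw [𝔾.r_of_isId he]; exact hh), phiF_apply_neg hh]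

variable (hu : ∀ g, IsIdentityElem (u g) (α.D g))
include hu

/-- The key product computation. -/
lemma key_prod {h k l : G} (c1 : 𝔾.r h = 𝔾.r k) (c2 : 𝔾.r k = 𝔾.r l) (a b : R) :
    α.act (𝔾.mul (𝔾.inv h) k) (a * u (𝔾.mul (𝔾.inv k) h))
      * α.act (𝔾.mul (𝔾.inv h) l) (b * u (𝔾.mul (𝔾.inv l) h))
    = α.act (𝔾.mul (𝔾.inv h) k)
        ((a * α.act (𝔾.mul (𝔾.inv k) l) (b * u (𝔾.mul (𝔾.inv l) k)))
          * u (𝔾.mul (𝔾.inv k) h)) := by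
  have c3 : 𝔾.r h = 𝔾.r l := c1.trans c2
  set hk := 𝔾.mul (𝔾.inv h) k with hhk
  set kh := 𝔾.mul (𝔾.inv k) h with hkh
  set hl := 𝔾.mul (𝔾.inv h) l with hhl
  set lh := 𝔾.mul (𝔾.inv l) h with hlh
  set kl := 𝔾.mul (𝔾.inv k) l with hkl
  set lk := 𝔾.mul (𝔾.inv l) k with hlk
  have ihk : 𝔾.inv hk = kh := 𝔾.inv_invmul c1
  have ihl : 𝔾.inv hl = lh := 𝔾.inv_invmul c3
  have ikl : 𝔾.inv kl = lk := 𝔾.inv_invmul c2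
  have hF1arg : a * u kh ∈ α.D (𝔾.inv hk) := by rw [ihk]; exact pa_unit_mul_mem_left hu a
  have hF1 : α.act hk (a * u kh) ∈ α.D hk := pa_mapsTo hF1arg
  have hyarg : b * u lh ∈ α.D (𝔾.inv hl) := by rw [ihl]; exact pa_unit_mul_mem_left hu b
  have hCdom : 𝔾.d hl = 𝔾.r lk := by rw [hhl, hlk, 𝔾.d_invmul c3, 𝔾.r_invmul c2.symm]
  have hCmul : 𝔾.mul hl lk = hk := 𝔾.triple c3 c2.symm
  have stepC : α.act hl ((b * u lh) * u lk) = α.act hl (b * u lh) * u hk := by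
    rw [pa_act_unit hu hCdom hyarg, hCmul]
  have stepD : (b * u lh) * u lk = (b * u lk) * u lh := by
    rw [mul_assoc, mul_assoc, pa_u_central hu lh (u lk)]
  have hFdom : 𝔾.d kl = 𝔾.r lh := by rw [hkl, hlh, 𝔾.d_invmul c2, 𝔾.r_invmul c3.symm]
  have hFmul : 𝔾.mul kl lh = kh := 𝔾.triple c2 c3.symm
  have hwmem : b * u lk ∈ α.D (𝔾.inv kl) := by rw [ikl]; exact pa_unit_mul_mem_left hu b
  have stepF : α.act kl ((b * u lk) * u lh) = α.act kl (b * u lk) * u kh := by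
    rw [pa_act_unit hu hFdom hwmem, hFmul]
  have hEdom : 𝔾.d hk = 𝔾.r kl := by rw [hhk, hkl, 𝔾.d_invmul c1, 𝔾.r_invmul c2]
  have hEmul : 𝔾.mul hk kl = hl := 𝔾.triple c1 c2
  have hxmem : (b * u lk) * u lh ∈ α.D (𝔾.inv kl) := by
    rw [ikl]
    exact (pa_D_ideal hu lk).mul_mem_right (pa_unit_mul_mem_left hu b) (Set.mem_univ _)
  have hactmem : α.act kl ((b * u lk) * u lh) ∈ α.D (𝔾.inv hk) := by
    rw [ihk, stepF]; exact pa_unit_mul_mem_left hu _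
  have stepE := α.comp_cond hk kl hEdom _ hxmem hactmem
  rw [hEmul] at stepE
  have hqmem : α.act kl (b * u lk) * u kh ∈ α.D (𝔾.inv hk) := by
    rw [ihk]; exact pa_unit_mul_mem_left hu _
  calc α.act hk (a * u kh) * α.act hl (b * u lh)
      = α.act hk (a * u kh) * (α.act hl (b * u lh) * u hk) := by
        conv_lhs => rw [← ((hu hk).2 _ hF1).2]
        rw [mul_assoc (α.act hk (a * u kh)) (u hk) _,
          pa_u_central hu hk (α.act hl (b * u lh))]
    _ = α.act hk (a * u kh) * α.act hl ((b * u lh) * u lk) := by rw [stepC]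
    _ = α.act hk (a * u kh) * α.act hk (α.act kl ((b * u lk) * u lh)) := by
        rw [stepD, ← stepE]
    _ = α.act hk (a * u kh) * α.act hk (α.act kl (b * u lk) * u kh) := by rw [stepF]
    _ = α.act hk ((a * u kh) * (α.act kl (b * u lk) * u kh)) :=
        (α.map_mul hk _ hF1arg _ hqmem).symm
    _ = α.act hk ((a * α.act kl (b * u lk)) * u kh) := by
        congr 1
        set q := α.act kl (b * u lk) with hq
        have hid : u kh * u kh = u kh := ((hu kh).2 _ (hu kh).1).1
        have h1 : u kh * (q * u kh) = q * u kh := by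
          rw [pa_u_central hu kh (q * u kh), mul_assoc, hid]
        rw [mul_assoc a (u kh) _, h1, ← mul_assoc]

lemma genMul_eq {k l : G} (c3 : 𝔾.r k = 𝔾.r l) (a b : R) :
    bactF 𝔾 k (phiF 𝔾 α u (𝔾.d k) a) * bactF 𝔾 l (phiF 𝔾 α u (𝔾.d l) b)
      = bactF 𝔾 k (phiF 𝔾 α u (𝔾.d k)
          (a * α.act (𝔾.mul (𝔾.inv k) l) (b * u (𝔾.mul (𝔾.inv l) k)))) := by
  funext h
  by_cases hh : 𝔾.r h = 𝔾.r k
  · rw [Pi.mul_apply, genApply hh, genApply (hh.trans c3), genApply hh]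
    exact key_prod hu hh c3 a b
  · rw [Pi.mul_apply, genApply_ne hh a, zero_mul, genApply_ne hh]

omit hu

lemma genMul_ne {k l : G} (hne : ¬ 𝔾.r k = 𝔾.r l) (a b : R) :
    bactF 𝔾 k (phiF 𝔾 α u (𝔾.d k) a) * bactF 𝔾 l (phiF 𝔾 α u (𝔾.d l) b) = 0 := by
  funext h
  rw [Pi.mul_apply]
  by_cases hh : 𝔾.r h = 𝔾.r k
  · rw [genApply_ne (fun e => hne (hh.symm.trans e)) b, mul_zero]
    rfl
  · rw [genApply_ne hh, zero_mul]
    rfl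

lemma mem_SF_support {g : G} {f : G → R} (hf : f ∈ SFgrp 𝔾 α u g) :
    ∀ h, ¬ 𝔾.r h = 𝔾.r g → f h = 0 := by
  refine AddSubgroup.closure_induction ?_ ?_ ?_ ?_ hf
  · rintro x hx h hh
    simp only [genSet, Set.mem_iUnion, Set.mem_setOf_eq] at hx
    obtain ⟨k, hk, ⟨f0, ⟨a, _, rfl⟩, rfl⟩⟩ := hx
    exact genApply_ne (fun e => hh (e.trans hk)) a
  · intro h hh; rfl
  · intro x y _ _ px py h hh
    rw [Pi.add_apply, px h hh, py h hh, add_zero]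
  · intro x _ px h hh
    rw [Pi.neg_apply, px h hh, neg_zero]

end Construction

section Construction2

open Set

variable {G : Type u} {𝔾 : AlgGroupoid G} {R : Type u} [NonUnitalRing R]
  {α : PartialGroupoidAction 𝔾 R (Set.univ : Set R)} {u : G → R}

lemma gen_mem_all {k : G} {a : R} (ha : a ∈ α.D (𝔾.d k)) :
    bactF 𝔾 k (phiF 𝔾 α u (𝔾.d k) a) ∈ gensAll 𝔾 α u :=
  Set.mem_iUnion.2 ⟨k, Set.mem_image_of_mem _ (Set.mem_image_of_mem _ ha)⟩

lemma gen_mem_class {g k : G} {a : R} (hk : 𝔾.r k = 𝔾.r g) (ha : a ∈ α.D (𝔾.d k)) :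
    bactF 𝔾 k (phiF 𝔾 α u (𝔾.d k) a) ∈ genSet 𝔾 α u g :=
  Set.mem_biUnion hk (Set.mem_image_of_mem _ (Set.mem_image_of_mem _ ha))

lemma genSet_sub_all {g : G} : genSet 𝔾 α u g ⊆ gensAll 𝔾 α u := by
  intro x hx
  simp only [genSet, Set.mem_iUnion, Set.mem_setOf_eq] at hx
  obtain ⟨k, _, hx⟩ := hx
  exact Set.mem_iUnion.2 ⟨k, hx⟩

lemma SF_le_A (g : G) : SFgrp 𝔾 α u g ≤ Agrp 𝔾 α u :=
  AddSubgroup.closure_mono genSet_sub_all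

lemma SF_congr {g1 g2 : G} (h : 𝔾.r g1 = 𝔾.r g2) :
    SFgrp 𝔾 α u g1 = SFgrp 𝔾 α u g2 := by
  unfold SFgrp genSet
  rw [h]

lemma bact_mem_A {g : G} {f : G → R} (hf : f ∈ Agrp 𝔾 α u) :
    bactF 𝔾 g f ∈ Agrp 𝔾 α u := by
  refine AddSubgroup.closure_induction ?_ ?_ ?_ ?_ hf
  · intro x hx
    obtain ⟨k, ⟨f0, ⟨a, ha, rfl⟩, rfl⟩⟩ := Set.mem_iUnion.1 hx
    by_cases hc : 𝔾.d g = 𝔾.r k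
    · rw [bact_comp hc]
      have hd : 𝔾.d (𝔾.mul g k) = 𝔾.d k := 𝔾.d_mul _ _ hc
      have h1 := gen_mem_all (u := u) (k := 𝔾.mul g k) (a := a) (by rw [hd]; exact ha)
      rw [hd] at h1
      exact AddSubgroup.subset_closure h1
    · rw [bact_gen_ne hc]
      exact zero_mem _
  · rw [bactF_zero]
    exact zero_mem _
  · intro x y _ _ px py
    rw [bactF_add]
    exact add_mem px py
  · intro x _ px
    rw [bactF_neg]
    exact neg_mem px

lemma bact_mem_SF {g : G} {f : G → R} (hf : f ∈ SFgrp 𝔾 α u (𝔾.inv g)) :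
    bactF 𝔾 g f ∈ SFgrp 𝔾 α u g := by
  refine AddSubgroup.closure_induction ?_ ?_ ?_ ?_ hf
  · intro x hx
    simp only [genSet, Set.mem_iUnion, Set.mem_setOf_eq] at hx
    obtain ⟨k, hk, ⟨f0, ⟨a, ha, rfl⟩, rfl⟩⟩ := hx
    have hc : 𝔾.d g = 𝔾.r k := by rw [hk, 𝔾.r_inv]
    rw [bact_comp hc]
    have hd : 𝔾.d (𝔾.mul g k) = 𝔾.d k := 𝔾.d_mul _ _ hc
    have h1 := gen_mem_class (u := u) (g := g) (k := 𝔾.mul g k) (a := a)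
      (𝔾.r_mul' _ _ hc) (by rw [hd]; exact ha)
    rw [hd] at h1
    exact AddSubgroup.subset_closure h1
  · rw [bactF_zero]
    exact zero_mem _
  · intro x y _ _ px py
    rw [bactF_add]
    exact add_mem px py
  · intro x _ px
    rw [bactF_neg]
    exact neg_mem px

variable (hu : ∀ g, IsIdentityElem (u g) (α.D g))
include hu

lemma gen_mul_mem_SF {g k : G} {a : R} (hk : 𝔾.r k = 𝔾.r g) (ha : a ∈ α.D (𝔾.d k))
    {y : G → R} (hy : y ∈ Agrp 𝔾 α u) :
    bactF 𝔾 k (phiF 𝔾 α u (𝔾.d k) a) * y ∈ SFgrp 𝔾 α u g := by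
  refine AddSubgroup.closure_induction ?_ ?_ ?_ ?_ hy
  · intro x hx
    obtain ⟨l, ⟨f0, ⟨b, hb, rfl⟩, rfl⟩⟩ := Set.mem_iUnion.1 hx
    by_cases hc : 𝔾.r k = 𝔾.r l
    · rw [genMul_eq hu hc]
      exact AddSubgroup.subset_closure (gen_mem_class hk
        ((pa_D_ideal hu (𝔾.d k)).mul_mem_right ha (Set.mem_univ _)))
    · rw [genMul_ne hc]
      exact zero_mem _
  · rw [mul_zero]
    exact zero_mem _
  · intro x y _ _ px py
    rw [mul_add]
    exact add_mem px py
  · intro x _ px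
    rw [mul_neg]
    exact neg_mem px

lemma gen_mul_mem_SF' {g l : G} {b : R} (hl : 𝔾.r l = 𝔾.r g) (hb : b ∈ α.D (𝔾.d l))
    {y : G → R} (hy : y ∈ Agrp 𝔾 α u) :
    y * bactF 𝔾 l (phiF 𝔾 α u (𝔾.d l) b) ∈ SFgrp 𝔾 α u g := by
  refine AddSubgroup.closure_induction ?_ ?_ ?_ ?_ hy
  · intro x hx
    obtain ⟨k, ⟨f0, ⟨a, ha, rfl⟩, rfl⟩⟩ := Set.mem_iUnion.1 hx
    by_cases hc : 𝔾.r k = 𝔾.r l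
    · rw [genMul_eq hu hc]
      exact AddSubgroup.subset_closure (gen_mem_class (hc.trans hl)
        ((pa_D_ideal hu (𝔾.d k)).mul_mem_right ha (Set.mem_univ _)))
    · rw [genMul_ne hc]
      exact zero_mem _
  · rw [zero_mul]
    exact zero_mem _
  · intro x y _ _ px py
    rw [add_mul]
    exact add_mem px py
  · intro x _ px
    rw [neg_mul]
    exact neg_mem px

lemma mul_mem_SF {g : G} {x y : G → R} (hx : x ∈ SFgrp 𝔾 α u g) (hy : y ∈ Agrp 𝔾 α u) :
    x * y ∈ SFgrp 𝔾 α u g := by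
  refine AddSubgroup.closure_induction ?_ ?_ ?_ ?_ hx
  · intro x hxg
    simp only [genSet, Set.mem_iUnion, Set.mem_setOf_eq] at hxg
    obtain ⟨k, hk, ⟨f0, ⟨a, ha, rfl⟩, rfl⟩⟩ := hxg
    exact gen_mul_mem_SF hu hk ha hy
  · rw [zero_mul]
    exact zero_mem _
  · intro x x' _ _ px py
    rw [add_mul]
    exact add_mem px py
  · intro x _ px
    rw [neg_mul]
    exact neg_mem px

lemma mul_mem_SF' {g : G} {x y : G → R} (hx : x ∈ Agrp 𝔾 α u) (hy : y ∈ SFgrp 𝔾 α u g) :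
    x * y ∈ SFgrp 𝔾 α u g := by
  refine AddSubgroup.closure_induction ?_ ?_ ?_ ?_ hy
  · intro y hyg
    simp only [genSet, Set.mem_iUnion, Set.mem_setOf_eq] at hyg
    obtain ⟨l, hl, ⟨f0, ⟨b, hb, rfl⟩, rfl⟩⟩ := hyg
    exact gen_mul_mem_SF' hu hl hb hx
  · rw [mul_zero]
    exact zero_mem _
  · intro y y' _ _ px py
    rw [mul_add]
    exact add_mem px py
  · intro y _ px
    rw [mul_neg]
    exact neg_mem px

lemma mul_mem_A {x y : G → R} (hx : x ∈ Agrp 𝔾 α u) (hy : y ∈ Agrp 𝔾 α u) :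
    x * y ∈ Agrp 𝔾 α u := by
  refine AddSubgroup.closure_induction ?_ ?_ ?_ ?_ hx
  · intro x hxg
    obtain ⟨k, ⟨f0, ⟨a, ha, rfl⟩, rfl⟩⟩ := Set.mem_iUnion.1 hxg
    exact SF_le_A k (gen_mul_mem_SF hu rfl ha hy)
  · rw [zero_mul]
    exact zero_mem _
  · intro x x' _ _ px py
    rw [add_mul]
    exact add_mem px py
  · intro x _ px
    rw [neg_mul]
    exact neg_mem px

lemma phiF_add (e : G) (a b : R) :
    phiF 𝔾 α u e (a + b) = phiF 𝔾 α u e a + phiF 𝔾 α u e b := by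
  funext h
  by_cases hh : 𝔾.r h = e
  · rw [Pi.add_apply, phiF_apply_pos hh, phiF_apply_pos hh, phiF_apply_pos hh, add_mul]
    exact α.map_add (𝔾.inv h) _ (by rw [𝔾.inv_inv]; exact pa_unit_mul_mem_left hu a) _
      (by rw [𝔾.inv_inv]; exact pa_unit_mul_mem_left hu b)
  · rw [Pi.add_apply, phiF_apply_neg hh, phiF_apply_neg hh, phiF_apply_neg hh, add_zero]

lemma phiF_neg (e : G) (a : R) : phiF 𝔾 α u e (-a) = - phiF 𝔾 α u e a := by
  funext h
  by_cases hh : 𝔾.r h = e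
  · rw [Pi.neg_apply, phiF_apply_pos hh, phiF_apply_pos hh, neg_mul]
    exact pa_act_neg (by rw [𝔾.inv_inv]; exact pa_unit_mul_mem_left hu a)
  · rw [Pi.neg_apply, phiF_apply_neg hh, phiF_apply_neg hh, neg_zero]

omit hu

lemma phiF_zero (e : G) : phiF 𝔾 α u e (0 : R) = 0 := by
  funext h
  by_cases hh : 𝔾.r h = e
  · rw [phiF_apply_pos hh, zero_mul, pa_act_zero]
    rfl
  · rw [phiF_apply_neg hh]
    rfl

include hu

lemma phiF_mul (e : G) (a b : R) :
    phiF 𝔾 α u e (a * b) = phiF 𝔾 α u e a * phiF 𝔾 α u e b := by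
  funext h
  by_cases hh : 𝔾.r h = e
  · rw [Pi.mul_apply, phiF_apply_pos hh, phiF_apply_pos hh, phiF_apply_pos hh]
    have hmem1 : a * u h ∈ α.D (𝔾.inv (𝔾.inv h)) := by
      rw [𝔾.inv_inv]; exact pa_unit_mul_mem_left hu a
    have hmem2 : b * u h ∈ α.D (𝔾.inv (𝔾.inv h)) := by
      rw [𝔾.inv_inv]; exact pa_unit_mul_mem_left hu b
    rw [← α.map_mul (𝔾.inv h) _ hmem1 _ hmem2]
    congr 1
    have hid : u h * u h = u h := ((hu h).2 _ (hu h).1).1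
    rw [mul_assoc a (u h) _, pa_u_central hu h (b * u h), mul_assoc b (u h) (u h), hid,
      ← mul_assoc]
  · rw [Pi.mul_apply, phiF_apply_neg hh, phiF_apply_neg hh, phiF_apply_neg hh, mul_zero]

lemma phiF_apply_id {e : G} (he : 𝔾.isId e) {a : R} (ha : a ∈ α.D e) :
    phiF 𝔾 α u e a e = a := by
  rw [phiF_apply_pos (𝔾.r_of_isId he), 𝔾.inv_of_isId he, ((hu e).2 a ha).2]
  exact α.act_id e he a ha

omit hu

lemma phiF_mem_SF {e : G} (he : 𝔾.isId e) {a : R} (ha : a ∈ α.D e) :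
    phiF 𝔾 α u e a ∈ SFgrp 𝔾 α u e := by
  have h1 : bactF 𝔾 e (phiF 𝔾 α u (𝔾.d e) a) ∈ genSet 𝔾 α u e :=
    gen_mem_class rfl (by rw [he]; exact ha)
  rw [he, phiF_eq_bact_id he] at h1
  exact AddSubgroup.subset_closure h1

lemma phiF_mem_A {e : G} (he : 𝔾.isId e) {a : R} (ha : a ∈ α.D e) :
    phiF 𝔾 α u e a ∈ Agrp 𝔾 α u := SF_le_A e (phiF_mem_SF he ha)

include hu

lemma bact_phi_compat {g : G} {a : R} (ha : a ∈ α.D (𝔾.inv g)) :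
    bactF 𝔾 g (phiF 𝔾 α u (𝔾.d g) a) = phiF 𝔾 α u (𝔾.r g) (α.act g a) := by
  funext h
  by_cases hh : 𝔾.r h = 𝔾.r g
  · rw [genApply hh, phiF_apply_pos hh]
    exact (pa_key hu hh.symm ha).symm
  · rw [genApply_ne hh, phiF_apply_neg hh]

omit hu

lemma bact_bact_inv {g : G} {f : G → R} (hf : f ∈ SFgrp 𝔾 α u (𝔾.inv g)) :
    bactF 𝔾 (𝔾.inv g) (bactF 𝔾 g f) = f := by
  funext h
  by_cases hh : 𝔾.r h = 𝔾.d g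
  · rw [bactF_apply_pos (by rw [𝔾.r_inv]; exact hh), 𝔾.inv_inv,
      bactF_apply_pos (𝔾.r_mul' g h hh.symm), 𝔾.mul_cancel_left' hh.symm]
  · rw [bactF_apply_neg (by rw [𝔾.r_inv]; exact hh)]
    exact (mem_SF_support hf h (by rw [𝔾.r_inv]; exact hh)).symm

lemma bact_id_fix {e : G} (he : 𝔾.isId e) {f : G → R} (hf : f ∈ SFgrp 𝔾 α u e) :
    bactF 𝔾 e f = f := by
  funext h
  by_cases hh : 𝔾.r h = e
  · rw [bactF_apply_pos (by rw [𝔾.r_of_isId he]; exact hh), 𝔾.inv_of_isId he,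
      𝔾.id_mul he hh]
  · rw [bactF_apply_neg (by rw [𝔾.r_of_isId he]; exact hh)]
    exact (mem_SF_support hf h (by rw [𝔾.r_of_isId he]; exact hh)).symm

lemma bact_phi_eval_rg (g : G) (b : R) :
    bactF 𝔾 g (phiF 𝔾 α u (𝔾.d g) b) (𝔾.r g) = α.act g (b * u (𝔾.inv g)) := by
  rw [genApply (𝔾.r_r g) b, 𝔾.inv_of_isId (𝔾.isId_r g), 𝔾.r_mul, 𝔾.mul_r_inv]

end Construction2

section Construction3

open Set

variable {G : Type u} {𝔾 : AlgGroupoid G} {R : Type u} [NonUnitalRing R]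
  {α : PartialGroupoidAction 𝔾 R (Set.univ : Set R)} {u : G → R}
  (hu : ∀ g, IsIdentityElem (u g) (α.D g))

include hu

lemma SF_mul_phi {e : G} (he : 𝔾.isId e) (b : R) {f : G → R} (hf : f ∈ SFgrp 𝔾 α u e) :
    ∃ c ∈ α.D e, f * phiF 𝔾 α u e b = phiF 𝔾 α u e c := by
  refine AddSubgroup.closure_induction ?_ ?_ ?_ ?_ hf
  · intro x hx
    simp only [genSet, mem_iUnion, mem_setOf_eq] at hx
    obtain ⟨k, hk, ⟨f0, ⟨a, ha, rfl⟩, rfl⟩⟩ := hx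
    have hke : 𝔾.r k = e := by rw [hk, 𝔾.r_of_isId he]
    have hb2 : phiF 𝔾 α u e b = bactF 𝔾 e (phiF 𝔾 α u (𝔾.d e) b) := by
      rw [he, phiF_eq_bact_id he]
    have hinvk : 𝔾.mul (𝔾.inv k) e = 𝔾.inv k := by
      have hd : 𝔾.d (𝔾.inv k) = e := by rw [𝔾.d_inv, hke]
      conv_lhs => rw [← hd]
      exact 𝔾.mul_d _
    have hek : 𝔾.mul (𝔾.inv e) k = k := by rw [𝔾.inv_of_isId he, 𝔾.id_mul he hke]
    have hc3 : 𝔾.r k = 𝔾.r e := by rw [𝔾.r_of_isId he]; exact hke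
    have hq : α.act (𝔾.inv k) (b * u k) ∈ α.D (𝔾.inv k) :=
      pa_mapsTo (g := 𝔾.inv k) (by rw [𝔾.inv_inv]; exact pa_unit_mul_mem_left hu b)
    have hc0m : a * α.act (𝔾.inv k) (b * u k) ∈ α.D (𝔾.inv k) :=
      (pa_D_ideal hu (𝔾.inv k)).mul_mem_left (mem_univ a) hq
    refine ⟨α.act k (a * α.act (𝔾.inv k) (b * u k)), ?_, ?_⟩
    · have h1 : α.act k (a * α.act (𝔾.inv k) (b * u k)) ∈ α.D (𝔾.r k) :=
        pa_subset k (pa_mapsTo hc0m)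
      rwa [hke] at h1
    · rw [hb2, genMul_eq hu hc3, hinvk, hek, bact_phi_compat hu hc0m, hke]
  · exact ⟨0, pa_zero_mem e, by rw [zero_mul, phiF_zero]⟩
  · rintro x y _ _ ⟨cx, hcx, ex⟩ ⟨cy, hcy, ey⟩
    exact ⟨cx + cy, (α.ideal e).add_mem hcx hcy, by rw [add_mul, ex, ey, phiF_add hu]⟩
  · rintro x _ ⟨c, hc, exx⟩
    exact ⟨-c, (α.ideal e).neg_mem hc, by rw [neg_mul, exx, phiF_neg hu]⟩

lemma phi_mul_SF {e : G} (he : 𝔾.isId e) {b : R} (hb : b ∈ α.D e) {f : G → R}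
    (hf : f ∈ SFgrp 𝔾 α u e) :
    ∃ c ∈ α.D e, phiF 𝔾 α u e b * f = phiF 𝔾 α u e c := by
  refine AddSubgroup.closure_induction ?_ ?_ ?_ ?_ hf
  · intro x hx
    simp only [genSet, mem_iUnion, mem_setOf_eq] at hx
    obtain ⟨k, hk, ⟨f0, ⟨a, ha, rfl⟩, rfl⟩⟩ := hx
    have hke : 𝔾.r k = e := by rw [hk, 𝔾.r_of_isId he]
    have hb2 : phiF 𝔾 α u e b = bactF 𝔾 e (phiF 𝔾 α u (𝔾.d e) b) := by
      rw [he, phiF_eq_bact_id he]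
    have hinvk : 𝔾.mul (𝔾.inv k) e = 𝔾.inv k := by
      have hd : 𝔾.d (𝔾.inv k) = e := by rw [𝔾.d_inv, hke]
      conv_lhs => rw [← hd]
      exact 𝔾.mul_d _
    have hek : 𝔾.mul (𝔾.inv e) k = k := by rw [𝔾.inv_of_isId he, 𝔾.id_mul he hke]
    have hc3 : 𝔾.r e = 𝔾.r k := by rw [𝔾.r_of_isId he]; exact hke.symm
    refine ⟨b * α.act k (a * u (𝔾.inv k)), ?_, ?_⟩
    · exact (pa_D_ideal hu e).mul_mem_right hb (mem_univ _)
    · rw [hb2, genMul_eq hu hc3, hek, hinvk]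
      have hfin : bactF 𝔾 e (phiF 𝔾 α u (𝔾.d e) (b * α.act k (a * u (𝔾.inv k))))
          = phiF 𝔾 α u e (b * α.act k (a * u (𝔾.inv k))) := by
        rw [he, phiF_eq_bact_id he]
      rw [hfin]
  · exact ⟨0, pa_zero_mem e, by rw [mul_zero, phiF_zero]⟩
  · rintro x y _ _ ⟨cx, hcx, ex⟩ ⟨cy, hcy, ey⟩
    exact ⟨cx + cy, (α.ideal e).add_mem hcx hcy, by rw [mul_add, ex, ey, phiF_add hu]⟩
  · rintro x _ ⟨c, hc, exx⟩
    exact ⟨-c, (α.ideal e).neg_mem hc, by rw [mul_neg, exx, phiF_neg hu]⟩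

/-- The ambient ring of the globalization, as a non-unital subring of `G → R`. -/
noncomputable def Sring : NonUnitalSubring (G → R) where
  carrier := (Agrp 𝔾 α u : Set (G → R))
  zero_mem' := zero_mem _
  add_mem' := fun hx hy => add_mem hx hy
  neg_mem' := fun hx => neg_mem hx
  mul_mem' := fun hx hy => mul_mem_A hu hx hy

noncomputable def actT (g : G) (x : ↥(Sring hu)) : ↥(Sring hu) :=
  ⟨bactF 𝔾 g ↑x, bact_mem_A x.2⟩

open Classical in
noncomputable def phiT (e : G) (a : R) : ↥(Sring hu) :=
  if h : 𝔾.isId e ∧ a ∈ α.D e then ⟨phiF 𝔾 α u e a, phiF_mem_A h.1 h.2⟩ else 0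

noncomputable def βD (g : G) : Set ↥(Sring hu) :=
  {x | (x : G → R) ∈ SFgrp 𝔾 α u g}

lemma phiT_of_mem {e : G} (he : 𝔾.isId e) {a : R} (ha : a ∈ α.D e) :
    (phiT hu e a : G → R) = phiF 𝔾 α u e a := by
  rw [phiT, dif_pos ⟨he, ha⟩]

lemma βD_congr {g1 g2 : G} (h : 𝔾.r g1 = 𝔾.r g2) : βD hu g1 = βD hu g2 := by
  unfold βD
  rw [SF_congr h]

end Construction3

section Construction4

open Set

variable {G : Type u} {𝔾 : AlgGroupoid G} {R : Type u} [NonUnitalRing R]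
  {α : PartialGroupoidAction 𝔾 R (Set.univ : Set R)} {u : G → R}
  (hu : ∀ g, IsIdentityElem (u g) (α.D g))

lemma phiT_add {e : G} (he : 𝔾.isId e) {a b : R} (ha : a ∈ α.D e) (hb : b ∈ α.D e) :
    phiT hu e (a + b) = phiT hu e a + phiT hu e b := by
  apply Subtype.ext
  show (phiT hu e (a + b) : G → R) = (phiT hu e a : G → R) + (phiT hu e b : G → R)
  rw [phiT_of_mem hu he ((α.ideal e).add_mem ha hb), phiT_of_mem hu he ha,
    phiT_of_mem hu he hb, phiF_add hu]

lemma phiT_neg {e : G} (he : 𝔾.isId e) {a : R} (ha : a ∈ α.D e) :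
    phiT hu e (-a) = - phiT hu e a := by
  apply Subtype.ext
  show (phiT hu e (-a) : G → R) = -(phiT hu e a : G → R)
  rw [phiT_of_mem hu he ((α.ideal e).neg_mem ha), phiT_of_mem hu he ha, phiF_neg hu]

lemma phiT_zero {e : G} (he : 𝔾.isId e) : phiT hu e (0 : R) = 0 := by
  apply Subtype.ext
  show (phiT hu e (0 : R) : G → R) = 0
  rw [phiT_of_mem hu he (pa_zero_mem e), phiF_zero]

lemma phiT_mul {e : G} (he : 𝔾.isId e) {a b : R} (ha : a ∈ α.D e) (hb : b ∈ α.D e) :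
    phiT hu e (a * b) = phiT hu e a * phiT hu e b := by
  apply Subtype.ext
  show (phiT hu e (a * b) : G → R) = (phiT hu e a : G → R) * (phiT hu e b : G → R)
  rw [phiT_of_mem hu he ((pa_D_ideal hu e).mul_mem_right ha (Set.mem_univ b)),
    phiT_of_mem hu he ha, phiT_of_mem hu he hb, phiF_mul hu]

/-- The constructed global action of `𝔾` on `↥(Sring hu)`. -/
noncomputable def βcons : PartialGroupoidAction 𝔾 (↥(Sring hu)) (Set.univ : Set ↥(Sring hu)) where
  D := βD hu
  act := actT hu
  ideal_r g :=
    { subset := Set.subset_univ _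
      zero_mem := zero_mem (SFgrp 𝔾 α u (𝔾.r g))
      add_mem := fun x y hx hy =>
        show ((x + y : ↥(Sring hu)) : G → R) ∈ SFgrp 𝔾 α u (𝔾.r g) from add_mem hx hy
      neg_mem := fun x hx =>
        show ((-x : ↥(Sring hu)) : G → R) ∈ SFgrp 𝔾 α u (𝔾.r g) from neg_mem hx
      mul_mem_left := fun x y _ hy => mul_mem_SF' hu x.2 hy
      mul_mem_right := fun x y hx _ => mul_mem_SF hu hx y.2 }
  ideal g :=
    { subset := fun x hx => by
        have h := βD_congr hu (g1 := g) (g2 := 𝔾.r g) (𝔾.r_r g).symm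
        rw [← h]
        exact hx
      zero_mem := zero_mem (SFgrp 𝔾 α u g)
      add_mem := fun x y hx hy =>
        show ((x + y : ↥(Sring hu)) : G → R) ∈ SFgrp 𝔾 α u g from add_mem hx hy
      neg_mem := fun x hx =>
        show ((-x : ↥(Sring hu)) : G → R) ∈ SFgrp 𝔾 α u g from neg_mem hx
      mul_mem_left := fun x y _ hy => mul_mem_SF' hu x.2 hy
      mul_mem_right := fun x y hx _ => mul_mem_SF hu hx y.2 }
  bijOn g := by
    refine ⟨fun x hx => bact_mem_SF hx, ?_, ?_⟩
    · intro x hx y hy hxy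
      apply Subtype.ext
      have hval : bactF 𝔾 g (x : G → R) = bactF 𝔾 g (y : G → R) :=
        congrArg Subtype.val hxy
      calc (x : G → R) = bactF 𝔾 (𝔾.inv g) (bactF 𝔾 g (x : G → R)) :=
            (bact_bact_inv hx).symm
        _ = bactF 𝔾 (𝔾.inv g) (bactF 𝔾 g (y : G → R)) := by rw [hval]
        _ = (y : G → R) := bact_bact_inv hy
    · intro y hy
      have hy' : (y : G → R) ∈ SFgrp 𝔾 α u (𝔾.inv (𝔾.inv g)) := by
        rw [𝔾.inv_inv]; exact hy
      refine ⟨actT hu (𝔾.inv g) y, bact_mem_SF hy', ?_⟩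
      apply Subtype.ext
      have h1 := bact_bact_inv (g := 𝔾.inv g) hy'
      rw [𝔾.inv_inv] at h1
      exact h1
  map_add g x _ y _ := Subtype.ext (bactF_add g (x : G → R) (y : G → R))
  map_mul g x _ y _ := Subtype.ext (bactF_mul g (x : G → R) (y : G → R))
  act_id e he x hx := Subtype.ext (bact_id_fix he hx)
  dom_cond g h hgh x hx _ := by
    have heq : 𝔾.r (𝔾.inv h) = 𝔾.r (𝔾.inv (𝔾.mul g h)) := by
      rw [𝔾.r_inv, 𝔾.r_inv, 𝔾.d_mul _ _ hgh]
    exact (βD_congr hu heq) ▸ hx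
  comp_cond g h hgh x _ _ := Subtype.ext (bact_comp hgh (x : G → R))

lemma βcons_D : (βcons hu).D = βD hu := rfl

lemma βcons_act : (βcons hu).act = actT hu := rfl

lemma βcons_global : (βcons hu).IsGlobal := by
  intro g h hgh
  have heq : 𝔾.r (𝔾.inv h) = 𝔾.r (𝔾.inv (𝔾.mul g h)) := by
    rw [𝔾.r_inv, 𝔾.r_inv, 𝔾.d_mul _ _ hgh]
  have heq2 : 𝔾.r h = 𝔾.r (𝔾.inv g) := by rw [𝔾.r_inv]; exact hgh.symm
  ext x
  simp only [Set.mem_setOf_eq, βcons_D, βcons_act]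
  constructor
  · rintro ⟨hx, -⟩
    exact (βD_congr hu heq) ▸ hx
  · intro hx
    have hx' : x ∈ βD hu (𝔾.inv h) := (βD_congr hu heq.symm) ▸ hx
    refine ⟨hx', ?_⟩
    have h1 : actT hu h x ∈ βD hu h := bact_mem_SF hx'
    exact (βD_congr hu heq2) ▸ h1

end Construction4

section Construction5

open Set

variable {G : Type u} {𝔾 : AlgGroupoid G} {R : Type u} [NonUnitalRing R]
  {α : PartialGroupoidAction 𝔾 R (Set.univ : Set R)} {u : G → R}
  (hu : ∀ g, IsIdentityElem (u g) (α.D g))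

lemma spans_lemma (g : G) :
    βD hu g = ↑(AddSubgroup.closure
      (⋃ h ∈ {h : G | 𝔾.r h = 𝔾.r g},
        actT hu h '' (phiT hu (𝔾.d h) '' α.D (𝔾.d h)))) := by
  set s : Set ↥(Sring hu) := ⋃ h ∈ {h : G | 𝔾.r h = 𝔾.r g},
    actT hu h '' (phiT hu (𝔾.d h) '' α.D (𝔾.d h)) with hs
  let j : ↥(Sring hu) →+ (G → R) :=
    { toFun := fun x => (x : G → R), map_zero' := rfl, map_add' := fun _ _ => rfl }
  have himg : (fun x : ↥(Sring hu) => (x : G → R)) '' s = genSet 𝔾 α u g := by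
    rw [hs, Set.image_iUnion₂]
    unfold genSet
    apply Set.iUnion_congr
    intro h
    apply Set.iUnion_congr
    intro hh
    rw [Set.image_image, Set.image_image]
    rw [show (bactF 𝔾 h '' (phiF 𝔾 α u (𝔾.d h) '' α.D (𝔾.d h)))
        = (fun a => bactF 𝔾 h (phiF 𝔾 α u (𝔾.d h) a)) '' α.D (𝔾.d h) from
      Set.image_image _ _ _]
    apply Set.image_congr
    intro a ha
    show bactF 𝔾 h ((phiT hu (𝔾.d h) a : G → R)) = bactF 𝔾 h (phiF 𝔾 α u (𝔾.d h) a)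
    rw [phiT_of_mem hu (𝔾.isId_d h) ha]
  have hmap : (AddSubgroup.closure s).map j = SFgrp 𝔾 α u g := by
    have hj : ⇑j = (fun x : ↥(Sring hu) => (x : G → R)) := rfl
    rw [AddMonoidHom.map_closure, hj, himg]
    rfl
  ext x
  simp only [βD, Set.mem_setOf_eq, SetLike.mem_coe]
  constructor
  · intro hx
    rw [← hmap] at hx
    obtain ⟨y, hy, hyx⟩ := AddSubgroup.mem_map.1 hx
    have hxy : y = x := Subtype.ext hyx
    exact hxy ▸ hy
  · intro hx
    rw [← hmap]
    exact AddSubgroup.mem_map_of_mem j hx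

/-- The constructed globalization data. -/
noncomputable def globCons : Globalization 𝔾 α (βcons hu) where
  global := βcons_global hu
  φ := phiT hu
  φ_injOn e he := by
    intro a ha b hb hab
    have h1 : phiF 𝔾 α u e a = phiF 𝔾 α u e b := by
      have h2 := congrArg Subtype.val hab
      rwa [phiT_of_mem hu he ha, phiT_of_mem hu he hb] at h2
    have h3 := congrFun h1 e
    rwa [phiF_apply_id hu he ha, phiF_apply_id hu he hb] at h3
  φ_add e he x hx y hy := phiT_add hu he hx hy
  φ_mul e he x hx y hy := phiT_mul hu he hx hy
  φ_mem e he a ha := by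
    show ((phiT hu e a : ↥(Sring hu)) : G → R) ∈ SFgrp 𝔾 α u e
    rw [phiT_of_mem hu he ha]
    exact phiF_mem_SF he ha
  φ_ideal e he :=
    { subset := by
        rintro x ⟨a, ha, rfl⟩
        show ((phiT hu e a : ↥(Sring hu)) : G → R) ∈ SFgrp 𝔾 α u e
        rw [phiT_of_mem hu he ha]
        exact phiF_mem_SF he ha
      zero_mem := ⟨0, pa_zero_mem e, phiT_zero hu he⟩
      add_mem := by
        rintro x y ⟨a, ha, rfl⟩ ⟨b, hb, rfl⟩
        exact ⟨a + b, (α.ideal e).add_mem ha hb, phiT_add hu he ha hb⟩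
      neg_mem := by
        rintro x ⟨a, ha, rfl⟩
        exact ⟨-a, (α.ideal e).neg_mem ha, phiT_neg hu he ha⟩
      mul_mem_left := by
        rintro x y hx ⟨b, hb, rfl⟩
        obtain ⟨c, hc, hcc⟩ := SF_mul_phi hu he b (f := (x : G → R)) hx
        refine ⟨c, hc, ?_⟩
        apply Subtype.ext
        show (phiT hu e c : G → R) = (x : G → R) * (phiT hu e b : G → R)
        rw [phiT_of_mem hu he hc, phiT_of_mem hu he hb, ← hcc]
      mul_mem_right := by
        rintro x y ⟨b, hb, rfl⟩ hy
        obtain ⟨c, hc, hcc⟩ := phi_mul_SF hu he hb (f := (y : G → R)) hy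
        refine ⟨c, hc, ?_⟩
        apply Subtype.ext
        show (phiT hu e c : G → R) = (phiT hu e b : G → R) * (y : G → R)
        rw [phiT_of_mem hu he hc, phiT_of_mem hu he hb, ← hcc] }
  compat_D g := by
    ext x
    constructor
    · rintro ⟨a, ha, rfl⟩
      have harg : a ∈ α.D (𝔾.r g) := pa_subset g ha
      refine ⟨⟨a, harg, rfl⟩, ?_⟩
      have hb : α.act (𝔾.inv g) a ∈ α.D (𝔾.inv g) := pa_inv_mapsTo ha
      have hbd : α.act (𝔾.inv g) a ∈ α.D (𝔾.d g) := by
        have := pa_subset (𝔾.inv g) hb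
        rwa [𝔾.r_inv] at this
      refine ⟨phiT hu (𝔾.d g) (α.act (𝔾.inv g) a), ⟨_, hbd, rfl⟩, ?_⟩
      apply Subtype.ext
      show bactF 𝔾 g ((phiT hu (𝔾.d g) (α.act (𝔾.inv g) a) : G → R))
        = (phiT hu (𝔾.r g) a : G → R)
      rw [phiT_of_mem hu (𝔾.isId_d g) hbd, bact_phi_compat hu hb, pa_right_inv ha,
        phiT_of_mem hu (𝔾.isId_r g) harg]
    · rintro ⟨⟨a, ha, rfl⟩, ⟨y, ⟨b, hb, rfl⟩, hxy⟩⟩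
      have hval : bactF 𝔾 g ((phiT hu (𝔾.d g) b : G → R)) = (phiT hu (𝔾.r g) a : G → R) :=
        congrArg Subtype.val hxy
      rw [phiT_of_mem hu (𝔾.isId_d g) hb, phiT_of_mem hu (𝔾.isId_r g) ha] at hval
      have h2 := congrFun hval (𝔾.r g)
      rw [bact_phi_eval_rg g b, phiF_apply_id hu (𝔾.isId_r g) ha] at h2
      have hmem : a ∈ α.D g := by
        rw [← h2]
        exact pa_mapsTo (pa_unit_mul_mem_left hu b)
      exact ⟨a, hmem, rfl⟩
  compat_act g a ha := by
    have had : a ∈ α.D (𝔾.d g) := by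
      have := pa_subset (𝔾.inv g) ha
      rwa [𝔾.r_inv] at this
    have hag : α.act g a ∈ α.D (𝔾.r g) := pa_subset g (pa_mapsTo ha)
    apply Subtype.ext
    show bactF 𝔾 g ((phiT hu (𝔾.d g) a : G → R)) = (phiT hu (𝔾.r g) (α.act g a) : G → R)
    rw [phiT_of_mem hu (𝔾.isId_d g) had, bact_phi_compat hu ha,
      phiT_of_mem hu (𝔾.isId_r g) hag]
  spans g := spans_lemma hu g

/-- The bundled globalization. -/
noncomputable def globalizationCons : GlobalizationOf 𝔾 α where
  T := ↥(Sring hu)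
  ringT := inferInstance
  β := βcons hu
  glob := globCons hu

end Construction5

section Forward

open Set

variable {G : Type u} {𝔾 : AlgGroupoid G} {R : Type u} [NonUnitalRing R]
  {α : PartialGroupoidAction 𝔾 R (Set.univ : Set R)}

lemma forward_direction (hDe : ∀ e, 𝔾.isId e → ∃ u, IsIdentityElem u (α.D e))
    (GG : GlobalizationOf 𝔾 α) (g : G) : ∃ w, IsIdentityElem w (α.D g) := by
  letI : NonUnitalRing GG.T := GG.ringT
  obtain ⟨u1, hu1⟩ := hDe (𝔾.r g) (𝔾.isId_r g)
  obtain ⟨v, hv⟩ := hDe (𝔾.d g) (𝔾.isId_d g)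
  have hβD_congr : ∀ g1 g2, 𝔾.r g1 = 𝔾.r g2 → GG.β.D g1 = GG.β.D g2 := by
    intro g1 g2 h12
    rw [GG.glob.spans g1, GG.glob.spans g2, h12]
  have hEg : GG.β.D (𝔾.r g) = GG.β.D g := hβD_congr _ _ (𝔾.r_r g)
  have hEd : GG.β.D (𝔾.d g) = GG.β.D (𝔾.inv g) := hβD_congr _ _ (by rw [𝔾.r_d, 𝔾.r_inv])
  -- the two ideals
  set I₁ := GG.glob.φ (𝔾.r g) '' α.D (𝔾.r g) with hI₁
  set I₂ := GG.β.act g '' (GG.glob.φ (𝔾.d g) '' α.D (𝔾.d g)) with hI₂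
  have hφmem_d : ∀ {b : R}, b ∈ α.D (𝔾.d g) → GG.glob.φ (𝔾.d g) b ∈ GG.β.D (𝔾.inv g) := by
    intro b hb
    rw [← hEd]
    exact GG.glob.φ_mem (𝔾.d g) (𝔾.isId_d g) b hb
  have hφ0 : GG.glob.φ (𝔾.d g) 0 = 0 := by
    have h := GG.glob.φ_add (𝔾.d g) (𝔾.isId_d g) 0 (pa_zero_mem _) 0 (pa_zero_mem _)
    rw [add_zero] at h
    exact left_eq_add.mp h
  have hφneg : ∀ {b : R}, b ∈ α.D (𝔾.d g) → GG.glob.φ (𝔾.d g) (-b) = - GG.glob.φ (𝔾.d g) b := by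
    intro b hb
    have h := GG.glob.φ_add (𝔾.d g) (𝔾.isId_d g) b hb (-b) ((α.ideal (𝔾.d g)).neg_mem hb)
    rw [add_neg_cancel, hφ0] at h
    exact eq_neg_of_add_eq_zero_right h.symm
  have hI1ideal : IsIdealIn I₁ (GG.β.D g) := by
    have h := GG.glob.φ_ideal (𝔾.r g) (𝔾.isId_r g)
    rwa [hEg] at h
  have hI2sub : I₂ ⊆ GG.β.D g := by
    rintro x ⟨y, ⟨b, hb, rfl⟩, rfl⟩
    exact pa_mapsTo (hφmem_d hb)
  have hI2ideal : IsIdealIn I₂ (GG.β.D g) := by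
    refine ⟨hI2sub, ?_, ?_, ?_, ?_, ?_⟩
    · exact ⟨GG.glob.φ (𝔾.d g) 0, ⟨0, pa_zero_mem _, rfl⟩, by rw [hφ0, pa_act_zero]⟩
    · rintro x y ⟨y1, ⟨b1, hb1, rfl⟩, rfl⟩ ⟨y2, ⟨b2, hb2, rfl⟩, rfl⟩
      refine ⟨GG.glob.φ (𝔾.d g) (b1 + b2), ⟨b1 + b2, (α.ideal _).add_mem hb1 hb2, rfl⟩, ?_⟩
      rw [GG.glob.φ_add (𝔾.d g) (𝔾.isId_d g) b1 hb1 b2 hb2]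
      exact GG.β.map_add g _ (hφmem_d hb1) _ (hφmem_d hb2)
    · rintro x ⟨y1, ⟨b1, hb1, rfl⟩, rfl⟩
      refine ⟨GG.glob.φ (𝔾.d g) (-b1), ⟨-b1, (α.ideal _).neg_mem hb1, rfl⟩, ?_⟩
      rw [hφneg hb1]
      exact pa_act_neg (hφmem_d hb1)
    · rintro x y hx ⟨y1, ⟨b1, hb1, rfl⟩, rfl⟩
      obtain ⟨s, hs, rfl⟩ := (GG.β.bijOn g).surjOn hx
      have hs' : s ∈ GG.β.D (𝔾.d g) := by rw [hEd]; exact hs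
      have hmul : s * GG.glob.φ (𝔾.d g) b1 ∈ GG.glob.φ (𝔾.d g) '' α.D (𝔾.d g) :=
        (GG.glob.φ_ideal (𝔾.d g) (𝔾.isId_d g)).mul_mem_left hs' ⟨b1, hb1, rfl⟩
      refine ⟨s * GG.glob.φ (𝔾.d g) b1, hmul, ?_⟩
      exact GG.β.map_mul g s hs _ (hφmem_d hb1)
    · rintro x y ⟨y1, ⟨b1, hb1, rfl⟩, rfl⟩ hy
      obtain ⟨s, hs, rfl⟩ := (GG.β.bijOn g).surjOn hy
      have hs' : s ∈ GG.β.D (𝔾.d g) := by rw [hEd]; exact hs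
      have hmul : GG.glob.φ (𝔾.d g) b1 * s ∈ GG.glob.φ (𝔾.d g) '' α.D (𝔾.d g) :=
        (GG.glob.φ_ideal (𝔾.d g) (𝔾.isId_d g)).mul_mem_right ⟨b1, hb1, rfl⟩ hs'
      refine ⟨GG.glob.φ (𝔾.d g) b1 * s, hmul, ?_⟩
      exact GG.β.map_mul g _ (hφmem_d hb1) s hs
  have hinter : GG.glob.φ (𝔾.r g) '' α.D g = I₁ ∩ I₂ := GG.glob.compat_D g
  set e1 := GG.glob.φ (𝔾.r g) u1 with he1
  set e2 := GG.β.act g (GG.glob.φ (𝔾.d g) v) with he2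
  have he1I : e1 ∈ I₁ := ⟨u1, hu1.1, rfl⟩
  have he2I : e2 ∈ I₂ := ⟨GG.glob.φ (𝔾.d g) v, ⟨v, hv.1, rfl⟩, rfl⟩
  have he1mem : e1 ∈ GG.β.D g := hI1ideal.subset he1I
  have he2mem : e2 ∈ GG.β.D g := hI2sub he2I
  have hw_mem : e1 * e2 ∈ I₁ ∩ I₂ :=
    ⟨hI1ideal.mul_mem_right he1I he2mem, hI2ideal.mul_mem_left he1mem he2I⟩
  -- e1 is a left/right identity on I₁
  have he1id : ∀ x ∈ I₁, e1 * x = x ∧ x * e1 = x := by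
    rintro x ⟨a, ha, rfl⟩
    constructor
    · rw [he1, ← GG.glob.φ_mul (𝔾.r g) (𝔾.isId_r g) u1 hu1.1 a ha, (hu1.2 a ha).1]
    · rw [he1, ← GG.glob.φ_mul (𝔾.r g) (𝔾.isId_r g) a ha u1 hu1.1, (hu1.2 a ha).2]
  have he2id : ∀ x ∈ I₂, e2 * x = x ∧ x * e2 = x := by
    rintro x ⟨y, ⟨b, hb, rfl⟩, rfl⟩
    constructor
    · rw [he2, ← GG.β.map_mul g _ (hφmem_d hv.1) _ (hφmem_d hb),
        ← GG.glob.φ_mul (𝔾.d g) (𝔾.isId_d g) v hv.1 b hb, (hv.2 b hb).1]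
    · rw [he2, ← GG.β.map_mul g _ (hφmem_d hb) _ (hφmem_d hv.1),
        ← GG.glob.φ_mul (𝔾.d g) (𝔾.isId_d g) b hb v hv.1, (hv.2 b hb).2]
  have hwid : ∀ x ∈ I₁ ∩ I₂, (e1 * e2) * x = x ∧ x * (e1 * e2) = x := by
    rintro x ⟨hx1, hx2⟩
    constructor
    · rw [mul_assoc, (he2id x hx2).1, (he1id x hx1).1]
    · rw [← mul_assoc, (he1id x hx1).2, (he2id x hx2).2]
  rw [← hinter] at hw_mem
  obtain ⟨c, hcg, hc⟩ := hw_mem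
  have hcr : c ∈ α.D (𝔾.r g) := pa_subset g hcg
  refine ⟨c, hcg, fun x hx => ?_⟩
  have hxr : x ∈ α.D (𝔾.r g) := pa_subset g hx
  have hφx : GG.glob.φ (𝔾.r g) x ∈ I₁ ∩ I₂ := by
    rw [← hinter]
    exact ⟨x, hx, rfl⟩
  constructor
  · have h1 : GG.glob.φ (𝔾.r g) (c * x) = GG.glob.φ (𝔾.r g) x := by
      rw [GG.glob.φ_mul (𝔾.r g) (𝔾.isId_r g) c hcr x hxr, hc, (hwid _ hφx).1]
    exact GG.glob.φ_injOn (𝔾.r g) (𝔾.isId_r g)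
      ((α.ideal_r g).mul_mem_left (Set.mem_univ c) hxr) hxr h1
  · have h1 : GG.glob.φ (𝔾.r g) (x * c) = GG.glob.φ (𝔾.r g) x := by
      rw [GG.glob.φ_mul (𝔾.r g) (𝔾.isId_r g) x hxr c hcr, hc, (hwid _ hφx).2]
    exact GG.glob.φ_injOn (𝔾.r g) (𝔾.isId_r g)
      ((α.ideal_r g).mul_mem_right hxr (Set.mem_univ c)) hxr h1

end Forward

/-- **Theorem 2.1 (existence)**: let `α` be a partial action of a groupoid `G`
on a ring `R` such that `D_e` is a unital ring for every identity `e ∈ G₀`.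
Then `α` admits a globalization if and only if every ideal `D_g`, `g ∈ G`, is
a unital ring. -/
theorem globalization_exists_iff {G : Type u} [Nonempty G] (𝔾 : AlgGroupoid G)
    {R : Type u} [NonUnitalRing R] (α : PartialGroupoidAction 𝔾 R (Set.univ : Set R))
    (hDe : ∀ e, 𝔾.isId e → ∃ u, IsIdentityElem u (α.D e)) :
    Nonempty (GlobalizationOf 𝔾 α) ↔ ∀ g : G, ∃ u, IsIdentityElem u (α.D g) := by
  constructor
  · rintro ⟨GG⟩ g
    exact forward_direction hDe GG g
  · intro hall
    choose u hu using hall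
    exact ⟨globalizationCons hu⟩
end

section
/- With A = R⋆_αG and B = T⋆_βG as in the standing assumptions, B·1_A = {Σ_{g∈G} c_gδ_g : c_g ∈ β_g(D_{d(g)}) for all g ∈ G} and 1_A·B = {Σ_{g∈G} c_gδ_g : c_g ∈ D_{r(g)} for all g ∈ G}. -/
universe u

/-- A realization of the (partial) skew groupoid ring `R ⋆_α G` on the ring
`A`: the maps `δ g : D_g → A`, `x ↦ x·δ_g`, are additive, their images are
independent and span `A` (so `A = ⊕_{g ∈ G} D_g δ_g` as an additive group),
and multiplication is given by
`(x δ_g)(y δ_h) = α_g(α_{g⁻¹}(x) y) δ_{gh}` if `(g,h) ∈ G²` and `0` otherwise. -/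
structure SkewRingRep {G : Type u} (𝔾 : AlgGroupoid G) {T : Type u} [NonUnitalRing T]
    {R : Set T} (α : PartialGroupoidAction 𝔾 T R) (A : Type u) [NonUnitalRing A] where
  δ : G → T → A
  map_add : ∀ g, ∀ x ∈ α.D g, ∀ y ∈ α.D g, δ g (x + y) = δ g x + δ g y
  mul_of : ∀ g h, 𝔾.d g = 𝔾.r h → ∀ x ∈ α.D g, ∀ y ∈ α.D h,
    δ g x * δ h y = δ (𝔾.mul g h) (α.act g (α.act (𝔾.inv g) x * y))
  mul_of_ne : ∀ g h, 𝔾.d g ≠ 𝔾.r h → ∀ x ∈ α.D g, ∀ y ∈ α.D h, δ g x * δ h y = 0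
  indep : ∀ (s : Finset G) (c : G → T), (∀ g, c g ∈ α.D g) →
    (∑ g ∈ s, δ g (c g)) = 0 → ∀ g ∈ s, c g = 0
  spans : ∀ a : A, ∃ (s : Finset G) (c : G → T), (∀ g, c g ∈ α.D g) ∧ a = ∑ g ∈ s, δ g (c g)

namespace AlgGroupoid

lemma inv_r' {G : Type u} (𝔾 : AlgGroupoid G) (g : G) : 𝔾.inv (𝔾.r g) = 𝔾.r g := by
  have h1 := 𝔾.r_mul (𝔾.inv (𝔾.r g))
  rw [𝔾.r_inv, 𝔾.d_r] at h1
  have h2 := 𝔾.mul_inv (𝔾.r g)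
  rw [𝔾.r_r] at h2
  rw [h2] at h1
  exact h1.symm

lemma isId_r_s4 {G : Type u} (𝔾 : AlgGroupoid G) (e : G) (he : 𝔾.isId e) : 𝔾.r e = e := by
  have he' : 𝔾.d e = e := he
  have h := 𝔾.r_d e
  rw [he'] at h
  exact h

end AlgGroupoid

/-- For a global action, `E_g = E_{r(g)}`. -/
lemma D_r_eq_of_global {G : Type u} (𝔾 : AlgGroupoid G) {T : Type u} [NonUnitalRing T]
    (β : PartialGroupoidAction 𝔾 T (Set.univ : Set T)) (hglobal : β.IsGlobal) (g : G) :
    β.D g = β.D (𝔾.r g) := by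
  have h := hglobal g (𝔾.inv g) (𝔾.r_inv g).symm
  rw [𝔾.inv_inv, 𝔾.mul_inv, 𝔾.inv_r'] at h
  rw [← h]
  ext x
  simp only [Set.mem_setOf_eq]
  exact ⟨fun hx => ⟨hx, (β.bijOn (𝔾.inv g)).mapsTo (by rw [𝔾.inv_inv]; exact hx)⟩,
    fun hx => hx.1⟩

/-- **Proposition 3.1(i),(ii)**: with `A = R ⋆_α G` and `B = T ⋆_β G` as in the
standing assumptions (each `D_g` unital with identity `1_g`, `β` a
globalization of `α` with `D_e ⊆ E_e`, `G₀` finite), one has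
`B·1_A = {∑_g c_g δ_g : c_g ∈ β_g(D_{d(g)})}` and
`1_A·B = {∑_g c_g δ_g : c_g ∈ D_{r(g)}}`. -/
theorem skew_ring_mul_oneA {G : Type u} [Nonempty G] (𝔾 : AlgGroupoid G)
    {T : Type u} [NonUnitalRing T] {Rset : Set T}
    (α : PartialGroupoidAction 𝔾 T Rset)
    (β : PartialGroupoidAction 𝔾 T (Set.univ : Set T)) (hglobal : β.IsGlobal)
    (hDE : ∀ e, 𝔾.isId e → IsIdealIn (α.D e) (β.D e))
    (hcompatD : ∀ g, α.D g = α.D (𝔾.r g) ∩ (β.act g '' α.D (𝔾.d g)))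
    (hcompatAct : ∀ g, ∀ a ∈ α.D (𝔾.inv g), β.act g a = α.act g a)
    (hspans : ∀ g, β.D g
      = ↑(AddSubgroup.closure (⋃ h ∈ {h : G | 𝔾.r h = 𝔾.r g}, β.act h '' α.D (𝔾.d h))))
    (one : G → T) (hone : ∀ g, IsIdentityElem (one g) (α.D g))
    (hcentral : ∀ g (t : T), one g * t = t * one g)
    (G₀ : Finset G) (hG₀ : ∀ e, e ∈ G₀ ↔ 𝔾.isId e)
    {B : Type u} [NonUnitalRing B] (ρ : SkewRingRep 𝔾 β B) :
    let oneA : B := ∑ e ∈ G₀, ρ.δ e (one e)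
    ({x : B | ∃ b : B, x = b * oneA} =
      {x : B | ∃ (s : Finset G) (c : G → T),
        (∀ g ∈ s, c g ∈ β.act g '' α.D (𝔾.d g)) ∧ x = ∑ g ∈ s, ρ.δ g (c g)}) ∧
    ({x : B | ∃ b : B, x = oneA * b} =
      {x : B | ∃ (s : Finset G) (c : G → T),
        (∀ g ∈ s, c g ∈ α.D (𝔾.r g)) ∧ x = ∑ g ∈ s, ρ.δ g (c g)}) := by
  intro oneA
  have honeA : oneA = ∑ e ∈ G₀, ρ.δ e (one e) := rfl
  have hone' : ∀ g, one g ∈ α.D g := fun g => (hone g).1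
  have h1β : ∀ e, 𝔾.isId e → one e ∈ β.D e := fun e he => (hDE e he).subset (hone' e)
  have hdg₀ : ∀ g : G, 𝔾.d g ∈ G₀ := fun g => (hG₀ _).2 (𝔾.d_d g)
  have hrg₀ : ∀ g : G, 𝔾.r g ∈ G₀ := fun g => (hG₀ _).2 (𝔾.d_r g)
  have hDinv : ∀ g, β.D (𝔾.inv g) = β.D (𝔾.d g) := fun g => by
    rw [D_r_eq_of_global 𝔾 β hglobal (𝔾.inv g), 𝔾.r_inv]
  have hαβd : ∀ g, α.D (𝔾.d g) ⊆ β.D (𝔾.inv g) := fun g => by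
    rw [hDinv g]; exact (hDE (𝔾.d g) (𝔾.d_d g)).subset
  -- the key element membership
  have hy : ∀ g, ∀ x ∈ β.D g, β.act (𝔾.inv g) x * one (𝔾.d g) ∈ α.D (𝔾.d g) := by
    intro g x hx
    have h1 : β.act (𝔾.inv g) x ∈ β.D (𝔾.inv g) :=
      (β.bijOn (𝔾.inv g)).mapsTo (by rw [𝔾.inv_inv]; exact hx)
    rw [hDinv g] at h1
    exact (hDE (𝔾.d g) (𝔾.d_d g)).mul_mem_left h1 (hone' (𝔾.d g))
  have hmem2 : ∀ g, ∀ x ∈ β.D g, one (𝔾.r g) * x ∈ α.D (𝔾.r g) := fun g x hx =>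
    (hDE _ (𝔾.d_r g)).mul_mem_right (hone' _) ((β.ideal g).subset hx)
  -- key computation 1 : right multiplication by oneA
  have key1 : ∀ g, ∀ x ∈ β.D g,
      ρ.δ g x * oneA = ρ.δ g (β.act g (β.act (𝔾.inv g) x * one (𝔾.d g))) := by
    intro g x hx
    have h0 : ∀ e ∈ G₀, e ≠ 𝔾.d g → ρ.δ g x * ρ.δ e (one e) = 0 := by
      intro e he hne
      refine ρ.mul_of_ne g e ?_ x hx (one e) (h1β e ((hG₀ e).1 he))
      rw [𝔾.isId_r_s4 e ((hG₀ e).1 he)]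
      exact fun h => hne h.symm
    rw [honeA, Finset.mul_sum, Finset.sum_eq_single_of_mem (𝔾.d g) (hdg₀ g) h0]
    have h := ρ.mul_of g (𝔾.d g) (𝔾.r_d g).symm x hx (one (𝔾.d g)) (h1β _ (𝔾.d_d g))
    rw [𝔾.mul_d] at h
    exact h
  have key1r : ∀ g, ∀ a ∈ α.D (𝔾.d g), ρ.δ g (β.act g a) * oneA = ρ.δ g (β.act g a) := by
    intro g a ha
    have hainv : a ∈ β.D (𝔾.inv g) := hαβd g ha
    have hc : β.act g a ∈ β.D g := (β.bijOn g).mapsTo hainv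
    rw [key1 g _ hc]
    have hcomp := β.comp_cond (𝔾.inv g) g (𝔾.d_inv g) a hainv
      (by rw [𝔾.inv_inv]; exact hc)
    rw [𝔾.inv_mul] at hcomp
    have haid : β.act (𝔾.d g) a = a :=
      β.act_id (𝔾.d g) (𝔾.d_d g) a ((hDE _ (𝔾.d_d g)).subset ha)
    rw [hcomp, haid, ((hone (𝔾.d g)).2 a ha).2]
  -- key computation 2 : left multiplication by oneA
  have key2 : ∀ g, ∀ x ∈ β.D g, oneA * ρ.δ g x = ρ.δ g (one (𝔾.r g) * x) := by
    intro g x hx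
    have h0 : ∀ e ∈ G₀, e ≠ 𝔾.r g → ρ.δ e (one e) * ρ.δ g x = 0 := by
      intro e he hne
      refine ρ.mul_of_ne e g ?_ (one e) (h1β e ((hG₀ e).1 he)) x hx
      have hde : 𝔾.d e = e := (hG₀ e).1 he
      rw [hde]; exact hne
    rw [honeA, Finset.sum_mul, Finset.sum_eq_single_of_mem (𝔾.r g) (hrg₀ g) h0]
    have h := ρ.mul_of (𝔾.r g) g (𝔾.d_r g) (one (𝔾.r g)) (h1β _ (𝔾.d_r g)) x hx
    rw [𝔾.r_mul, 𝔾.inv_r'] at h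
    have h1 : β.act (𝔾.r g) (one (𝔾.r g)) = one (𝔾.r g) :=
      β.act_id _ (𝔾.d_r g) _ (h1β _ (𝔾.d_r g))
    rw [h1] at h
    rw [β.act_id _ (𝔾.d_r g) _ ((hDE _ (𝔾.d_r g)).subset (hmem2 g x hx))] at h
    exact h
  have key2r : ∀ g, ∀ c ∈ α.D (𝔾.r g), oneA * ρ.δ g c = ρ.δ g c := by
    intro g c hcα
    have hc : c ∈ β.D g := by
      rw [D_r_eq_of_global 𝔾 β hglobal g]
      exact (hDE _ (𝔾.d_r g)).subset hcα
    rw [key2 g c hc, ((hone (𝔾.r g)).2 c hcα).1]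
  constructor
  · ext x
    simp only [Set.mem_setOf_eq]
    constructor
    · rintro ⟨b, rfl⟩
      obtain ⟨s, c, hc, rfl⟩ := ρ.spans b
      refine ⟨s, fun g => β.act g (β.act (𝔾.inv g) (c g) * one (𝔾.d g)), ?_, ?_⟩
      · intro g _
        exact ⟨_, hy g (c g) (hc g), rfl⟩
      · rw [Finset.sum_mul]
        exact Finset.sum_congr rfl fun g _ => key1 g (c g) (hc g)
    · rintro ⟨s, c, hc, rfl⟩
      refine ⟨∑ g ∈ s, ρ.δ g (c g), ?_⟩
      rw [Finset.sum_mul]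
      refine (Finset.sum_congr rfl fun g hg => ?_).symm
      obtain ⟨a, ha, hac⟩ := hc g hg
      rw [← hac]
      exact key1r g a ha
  · ext x
    simp only [Set.mem_setOf_eq]
    constructor
    · rintro ⟨b, rfl⟩
      obtain ⟨s, c, hc, rfl⟩ := ρ.spans b
      refine ⟨s, fun g => one (𝔾.r g) * c g, ?_, ?_⟩
      · intro g _
        exact hmem2 g (c g) (hc g)
      · rw [Finset.mul_sum]
        exact Finset.sum_congr rfl fun g _ => key2 g (c g) (hc g)
    · rintro ⟨s, c, hc, rfl⟩
      refine ⟨∑ g ∈ s, ρ.δ g (c g), ?_⟩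
      rw [Finset.mul_sum]
      exact (Finset.sum_congr rfl fun g hg => key2r g (c g) (hc g hg)).symm
end

section
/- With A = R⋆_αG and B = T⋆_βG as in the standing assumptions, 1_A·B·1_A = A and B·1_A·B = B. -/
universe u

/-- **Proposition 3.1(iii),(iv)**: with `A = R ⋆_α G` and `B = T ⋆_β G` as in
the standing assumptions, `1_A·B·1_A = A` (where `A` is identified with the
set of finite sums `∑_g c_g δ_g`, `c_g ∈ D_g`, inside `B`) and `B·1_A·B = B`. -/
theorem skew_ring_corner_eq {G : Type u} [Nonempty G] (𝔾 : AlgGroupoid G)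
    {T : Type u} [NonUnitalRing T] {Rset : Set T}
    (α : PartialGroupoidAction 𝔾 T Rset)
    (β : PartialGroupoidAction 𝔾 T (Set.univ : Set T)) (hglobal : β.IsGlobal)
    (hDE : ∀ e, 𝔾.isId e → IsIdealIn (α.D e) (β.D e))
    (hcompatD : ∀ g, α.D g = α.D (𝔾.r g) ∩ (β.act g '' α.D (𝔾.d g)))
    (hcompatAct : ∀ g, ∀ a ∈ α.D (𝔾.inv g), β.act g a = α.act g a)
    (hspans : ∀ g, β.D g
      = ↑(AddSubgroup.closure (⋃ h ∈ {h : G | 𝔾.r h = 𝔾.r g}, β.act h '' α.D (𝔾.d h))))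
    (one : G → T) (hone : ∀ g, IsIdentityElem (one g) (α.D g))
    (hcentral : ∀ g (t : T), one g * t = t * one g)
    (G₀ : Finset G) (hG₀ : ∀ e, e ∈ G₀ ↔ 𝔾.isId e)
    {B : Type u} [NonUnitalRing B] (ρ : SkewRingRep 𝔾 β B) :
    let oneA : B := ∑ e ∈ G₀, ρ.δ e (one e)
    ({x : B | ∃ b : B, x = oneA * b * oneA} =
      {x : B | ∃ (s : Finset G) (c : G → T),
        (∀ g ∈ s, c g ∈ α.D g) ∧ x = ∑ g ∈ s, ρ.δ g (c g)}) ∧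
    (AddSubgroup.closure {x : B | ∃ b b' : B, x = b * oneA * b'} = ⊤) := by
  intro oneA
  have honeA : oneA = ∑ e ∈ G₀, ρ.δ e (one e) := rfl
  clear_value oneA
  -- basic groupoid facts
  have hr_id : ∀ e, 𝔾.isId e → 𝔾.r e = e := by
    intro e he
    conv_lhs => rw [← he]
    rw [𝔾.r_d, he]
  have hinv_id : ∀ e, 𝔾.isId e → 𝔾.inv e = e := by
    intro e he
    have h1 := 𝔾.mul_d (𝔾.inv e)
    rw [𝔾.d_inv, hr_id e he] at h1
    have h2 := 𝔾.inv_mul e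
    rw [he] at h2
    rw [← h1, h2]
  have hrg_id : ∀ g, 𝔾.isId (𝔾.r g) := fun g => 𝔾.d_r g
  have hdg_id : ∀ g, 𝔾.isId (𝔾.d g) := fun g => 𝔾.d_d g
  -- E_g = E_{r g}
  have hErg : ∀ g, β.D g = β.D (𝔾.r g) := by
    intro g
    have key := hglobal g (𝔾.inv g) (𝔾.r_inv g).symm
    rw [𝔾.mul_inv, hinv_id _ (hrg_id g)] at key
    rw [← key]
    ext x
    simp only [Set.mem_setOf_eq, 𝔾.inv_inv]
    refine ⟨fun h => ⟨h, ?_⟩, fun h => h.1⟩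
    have hm := (β.bijOn (𝔾.inv g)).mapsTo
    rw [𝔾.inv_inv] at hm
    exact hm h
  have hEinv : ∀ g, β.D (𝔾.inv g) = β.D (𝔾.d g) := by
    intro g; rw [hErg (𝔾.inv g), 𝔾.r_inv]
  -- D_g ⊆ E_g
  have hDsub : ∀ g, α.D g ⊆ β.D g := by
    intro g x hx
    rw [hErg g]
    exact (hDE (𝔾.r g) (hrg_id g)).subset ((α.ideal g).subset hx)
  have hmapsTo_g : ∀ g, ∀ x ∈ β.D (𝔾.d g), β.act g x ∈ β.D g := by
    intro g x hx
    exact (β.bijOn g).mapsTo (by rw [hEinv g]; exact hx)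
  have hmapsTo_inv : ∀ g, ∀ x ∈ β.D g, β.act (𝔾.inv g) x ∈ β.D (𝔾.d g) := by
    intro g x hx
    rw [← hEinv g]
    have hm := (β.bijOn (𝔾.inv g)).mapsTo
    rw [𝔾.inv_inv] at hm
    exact hm hx
  have hβinvβ : ∀ g, ∀ x ∈ β.D (𝔾.d g), β.act (𝔾.inv g) (β.act g x) = x := by
    intro g x hx
    have hx' : x ∈ β.D (𝔾.inv g) := by rw [hEinv g]; exact hx
    have hgx : β.act g x ∈ β.D (𝔾.inv (𝔾.inv g)) := by
      rw [𝔾.inv_inv]; exact hmapsTo_g g x hx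
    have h := β.comp_cond (𝔾.inv g) g (𝔾.d_inv g) x hx' hgx
    rw [𝔾.inv_mul] at h
    rw [h, β.act_id _ (hdg_id g) x hx]
  have hββinv : ∀ g, ∀ x ∈ β.D g, β.act g (β.act (𝔾.inv g) x) = x := by
    intro g x hx
    have h := hβinvβ (𝔾.inv g) x (by rw [𝔾.d_inv, ← hErg g]; exact hx)
    rwa [𝔾.inv_inv] at h
  -- δ basics
  have hδ0 : ∀ g, ρ.δ g (0 : T) = 0 := by
    intro g
    have h := ρ.map_add g 0 (β.ideal g).zero_mem 0 (β.ideal g).zero_mem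
    rw [add_zero] at h
    exact (add_eq_right.mp h.symm)
  have hδneg : ∀ g, ∀ x ∈ β.D g, ρ.δ g (-x) = - ρ.δ g x := by
    intro g x hx
    have h := ρ.map_add g x hx (-x) ((β.ideal g).neg_mem hx)
    rw [add_neg_cancel, hδ0 g] at h
    exact (eq_neg_of_add_eq_zero_right h.symm)
  -- K1 : left multiplication by oneA
  have K1 : ∀ g, ∀ x ∈ β.D g, oneA * ρ.δ g x = ρ.δ g (one (𝔾.r g) * x) := by
    intro g x hx
    have h1 : one (𝔾.r g) ∈ β.D (𝔾.r g) := hDsub _ (hone _).1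
    have hxr : x ∈ β.D (𝔾.r g) := by rw [← hErg g]; exact hx
    have hmem : one (𝔾.r g) * x ∈ β.D (𝔾.r g) :=
      (β.ideal (𝔾.r g)).mul_mem_left (by rw [𝔾.r_r]; exact h1) hxr
    rw [honeA, Finset.sum_mul]
    rw [Finset.sum_eq_single_of_mem (𝔾.r g) ((hG₀ _).mpr (hrg_id g))
      (fun e he hne => ρ.mul_of_ne e g (by rw [(hG₀ e).mp he]; exact hne) _
        (hDsub e (hone e).1) x hx)]
    have h := ρ.mul_of (𝔾.r g) g (𝔾.d_r g) _ h1 x hx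
    rw [𝔾.r_mul, hinv_id _ (hrg_id g)] at h
    rw [h, β.act_id (𝔾.r g) (hrg_id g) (one (𝔾.r g)) h1,
      β.act_id (𝔾.r g) (hrg_id g) _ hmem]
  -- K2 : right multiplication by oneA
  have K2 : ∀ g, ∀ x ∈ β.D g, ρ.δ g x * oneA = ρ.δ g (x * β.act g (one (𝔾.d g))) := by
    intro g x hx
    have h1 : one (𝔾.d g) ∈ β.D (𝔾.d g) := hDsub _ (hone _).1
    have h1' : one (𝔾.d g) ∈ β.D (𝔾.inv g) := by rw [hEinv g]; exact h1
    rw [honeA, Finset.mul_sum]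
    rw [Finset.sum_eq_single_of_mem (𝔾.d g) ((hG₀ _).mpr (hdg_id g))
      (fun e he hne => ρ.mul_of_ne g e
        (by rw [hr_id e ((hG₀ e).mp he)]; exact fun hh => hne hh.symm) x hx _
        (hDsub e (hone e).1))]
    have h := ρ.mul_of g (𝔾.d g) (𝔾.r_d g).symm x hx _ h1
    rw [𝔾.mul_d] at h
    rw [h, β.map_mul g _ (by rw [hEinv g]; exact hmapsTo_inv g x hx) _ h1',
      hββinv g x hx]
  -- K3 : β_g(1_{d g}) is a right identity on D_g
  have K3 : ∀ g, ∀ u ∈ α.D g, u * β.act g (one (𝔾.d g)) = u := by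
    intro g u hu
    rw [hcompatD g] at hu
    obtain ⟨-, p, hp, rfl⟩ := hu
    have hp' : p ∈ β.D (𝔾.inv g) := by rw [hEinv g]; exact hDsub _ hp
    have h1' : one (𝔾.d g) ∈ β.D (𝔾.inv g) := by
      rw [hEinv g]; exact hDsub _ (hone _).1
    rw [← β.map_mul g p hp' _ h1', ((hone (𝔾.d g)).2 p hp).2]
  -- K4 : the corner coefficient lies in D_g
  have K4 : ∀ g, ∀ x ∈ β.D g,
      (one (𝔾.r g) * x) * β.act g (one (𝔾.d g)) ∈ α.D g := by
    intro g x hx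
    have hxr : x ∈ β.D (𝔾.r g) := by rw [← hErg g]; exact hx
    have h1d : one (𝔾.d g) ∈ β.D (𝔾.d g) := hDsub _ (hone _).1
    have h1d' : one (𝔾.d g) ∈ β.D (𝔾.inv g) := by rw [hEinv g]; exact h1d
    have h1xg : one (𝔾.r g) * x ∈ β.D g :=
      (β.ideal g).mul_mem_left (hDsub _ (hone _).1) hx
    have hβ1 : β.act g (one (𝔾.d g)) ∈ β.D (𝔾.r g) := by
      rw [← hErg g]; exact hmapsTo_g g _ h1d
    have h1x : one (𝔾.r g) * x ∈ α.D (𝔾.r g) :=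
      (hDE (𝔾.r g) (hrg_id g)).mul_mem_right (hone (𝔾.r g)).1 hxr
    have ha : (one (𝔾.r g) * x) * β.act g (one (𝔾.d g)) ∈ α.D (𝔾.r g) :=
      (hDE (𝔾.r g) (hrg_id g)).mul_mem_right h1x hβ1
    have hinvmem : β.act (𝔾.inv g) (one (𝔾.r g) * x) ∈ β.D (𝔾.inv g) := by
      rw [hEinv g]; exact hmapsTo_inv g _ h1xg
    have hw : β.act (𝔾.inv g) (one (𝔾.r g) * x) * one (𝔾.d g) ∈ α.D (𝔾.d g) :=
      (hDE (𝔾.d g) (hdg_id g)).mul_mem_left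
        (by rw [← hEinv g]; exact hinvmem) (hone (𝔾.d g)).1
    have hβw : β.act g (β.act (𝔾.inv g) (one (𝔾.r g) * x) * one (𝔾.d g))
        = (one (𝔾.r g) * x) * β.act g (one (𝔾.d g)) := by
      rw [β.map_mul g _ hinvmem _ h1d', hββinv g _ h1xg]
    rw [hcompatD g]
    exact ⟨ha, _, hw, hβw⟩
  -- K5 : corner formula
  have K5 : ∀ g, ∀ x ∈ β.D g, oneA * ρ.δ g x * oneA
      = ρ.δ g ((one (𝔾.r g) * x) * β.act g (one (𝔾.d g))) := by
    intro g x hx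
    have h1xg : one (𝔾.r g) * x ∈ β.D g :=
      (β.ideal g).mul_mem_left (hDsub _ (hone _).1) hx
    rw [K1 g x hx, K2 g _ h1xg]
  -- K6 : oneA is an identity on A
  have K6 : ∀ g, ∀ c ∈ α.D g, oneA * ρ.δ g c * oneA = ρ.δ g c := by
    intro g c hc
    rw [K5 g c (hDsub g hc), ((hone (𝔾.r g)).2 c ((α.ideal g).subset hc)).1,
      K3 g c hc]
  refine ⟨?_, ?_⟩
  · ext x
    simp only [Set.mem_setOf_eq]
    constructor
    · rintro ⟨b, rfl⟩
      obtain ⟨s, c, hc, rfl⟩ := ρ.spans b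
      refine ⟨s, fun g => (one (𝔾.r g) * c g) * β.act g (one (𝔾.d g)),
        fun g _ => K4 g (c g) (hc g), ?_⟩
      rw [Finset.mul_sum, Finset.sum_mul]
      exact Finset.sum_congr rfl fun g _ => K5 g (c g) (hc g)
    · rintro ⟨s, c, hc, rfl⟩
      refine ⟨∑ g ∈ s, ρ.δ g (c g), ?_⟩
      rw [Finset.mul_sum, Finset.sum_mul]
      exact (Finset.sum_congr rfl fun g hg => K6 g (c g) (hc g hg)).symm
  · -- second claim
    have K7 : ∀ g h, 𝔾.r h = 𝔾.r g → ∀ u ∈ α.D (𝔾.d h),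
        ρ.δ g (β.act h u) ∈ {x : B | ∃ b b' : B, x = b * oneA * b'} := by
      intro g h hrh u hu
      set k := 𝔾.mul (𝔾.inv h) g with hk
      have hdinv : 𝔾.d (𝔾.inv h) = 𝔾.r g := by rw [𝔾.d_inv, hrh]
      have hrk : 𝔾.r k = 𝔾.d h := by rw [hk, 𝔾.r_mul' _ _ hdinv, 𝔾.r_inv]
      have huβ : u ∈ β.D (𝔾.d h) := hDsub _ hu
      have hβu : β.act h u ∈ β.D h := hmapsTo_g h u huβ
      have h1k : one (𝔾.d h) ∈ β.D k := by
        rw [hErg k, hrk]; exact hDsub _ (hone _).1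
      refine ⟨ρ.δ h (β.act h u), ρ.δ k (one (𝔾.d h)), ?_⟩
      have e1 : oneA * ρ.δ k (one (𝔾.d h)) = ρ.δ k (one (𝔾.d h)) := by
        rw [K1 k _ h1k, hrk, ((hone (𝔾.d h)).2 _ (hone (𝔾.d h)).1).1]
      rw [mul_assoc, e1]
      have e2 := ρ.mul_of h k (by rw [hrk]) _ hβu _ h1k
      have hmulhk : 𝔾.mul h k = g := by
        rw [hk, ← 𝔾.mul_assoc' h (𝔾.inv h) g (𝔾.r_inv h).symm hdinv,
          𝔾.mul_inv, hrh, 𝔾.r_mul]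
      rw [e2, hmulhk, hβinvβ h u huβ, ((hone (𝔾.d h)).2 u hu).2]
    have K8 : ∀ g, ∀ x ∈ β.D g,
        ρ.δ g x ∈ AddSubgroup.closure {x : B | ∃ b b' : B, x = b * oneA * b'} := by
      intro g x hx
      rw [hspans g, SetLike.mem_coe] at hx
      have main : x ∈ β.D g ∧
          ρ.δ g x ∈ AddSubgroup.closure {x : B | ∃ b b' : B, x = b * oneA * b'} := by
        refine AddSubgroup.closure_induction
          (p := fun z _ => z ∈ β.D g ∧
            ρ.δ g z ∈ AddSubgroup.closure {x : B | ∃ b b' : B, x = b * oneA * b'})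
          ?_ ?_ ?_ ?_ hx
        · intro z hz
          simp only [Set.mem_iUnion, Set.mem_image, Set.mem_setOf_eq] at hz
          obtain ⟨h, hrh, u, hu, rfl⟩ := hz
          refine ⟨?_, AddSubgroup.subset_closure (K7 g h hrh u hu)⟩
          rw [hErg g, ← hrh, ← hErg h]
          exact hmapsTo_g h u (hDsub _ hu)
        · exact ⟨(β.ideal g).zero_mem, by rw [hδ0 g]; exact zero_mem _⟩
        · rintro a b _ _ ⟨ha1, ha2⟩ ⟨hb1, hb2⟩
          exact ⟨(β.ideal g).add_mem ha1 hb1,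
            by rw [ρ.map_add g a ha1 b hb1]; exact add_mem ha2 hb2⟩
        · rintro a _ ⟨ha1, ha2⟩
          exact ⟨(β.ideal g).neg_mem ha1,
            by rw [hδneg g a ha1]; exact neg_mem ha2⟩
      exact main.2
    rw [eq_top_iff]
    rintro b -
    obtain ⟨s, c, hc, rfl⟩ := ρ.spans b
    exact AddSubgroup.sum_mem _ fun g _ => K8 g (c g) (hc g)
end

section
/- Under the standing hypotheses, t_α(α_g(x)) = t_α(x) for every g ∈ G and every x ∈ D_{g⁻¹}. -/
/-!
Only the terms of `t_α(α_g x)` indexed by `h` with `d h = r g`, and those of `t_α(x)` indexed by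
`l` with `d l = d g`, can be nonzero, since the ideals `D_e` of distinct identities are
orthogonal. For `d h = r g` one has
`α_h(α_g(x) 1_{h⁻¹}) = α_h(α_g(x 1_{(hg)⁻¹})) = α_{hg}(x 1_{(hg)⁻¹})`,
because `α_g` maps `D_{g⁻¹} ∩ D_{(hg)⁻¹}` onto `D_g ∩ D_{h⁻¹}` and hence maps the unit
`1_{g⁻¹} 1_{(hg)⁻¹}` of the first ideal to the unit `1_g 1_{h⁻¹}` of the second. The
bijection `h ↦ hg` then matches the two sums term by term.
-/

universe u

/-- The subring `R^α` of invariants of `R` under the partial action `α`,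
where `one g` denotes the identity element `1_g` of the ideal `D_g`. -/
def invariants {G : Type u} (𝔾 : AlgGroupoid G) {R : Type u} [Ring R]
    (α : PartialGroupoidAction 𝔾 R (Set.univ : Set R)) (one : G → R) : Set R :=
  {x : R | ∀ g : G, α.act g (x * one (𝔾.inv g)) = x * one g}

/-- The trace map `t_α : R → R`, `t_α(x) = ∑_{g ∈ G} α_g(x 1_{g⁻¹})`. -/
def traceMap {G : Type u} [Fintype G] (𝔾 : AlgGroupoid G) {R : Type u} [Ring R]
    (α : PartialGroupoidAction 𝔾 R (Set.univ : Set R)) (one : G → R) (x : R) : R :=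
  ∑ g : G, α.act g (x * one (𝔾.inv g))

/-- `R` is an `α`-partial Galois extension of `R^α`: there is a partial Galois
coordinate system `x_i, y_i ∈ R` with
`∑_i x_i α_g(y_i 1_{g⁻¹}) = δ_{e,g} 1_e` for all `e ∈ G₀`, `g ∈ G`. -/
def IsPartialGalois {G : Type u} [Fintype G] [DecidableEq G] (𝔾 : AlgGroupoid G)
    {R : Type u} [Ring R] (α : PartialGroupoidAction 𝔾 R (Set.univ : Set R))
    (one : G → R) : Prop :=
  ∃ (n : ℕ) (xs ys : Fin n → R), ∀ g : G,
    ∑ i, xs i * α.act g (ys i * one (𝔾.inv g)) = if 𝔾.isId g then one g else 0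

open Finset

namespace AlgGroupoid

variable {G : Type u} (𝔾 : AlgGroupoid G)

theorem mul_mul_inv_cancel {g h : G} (hgh : 𝔾.d h = 𝔾.r g) :
    𝔾.mul (𝔾.mul h g) (𝔾.inv g) = h := by
  rw [𝔾.mul_assoc' h g (𝔾.inv g) hgh (𝔾.r_inv g).symm, 𝔾.mul_inv, ← hgh, 𝔾.mul_d]

theorem mul_inv_mul_cancel {g l : G} (hlg : 𝔾.d l = 𝔾.d g) :
    𝔾.mul (𝔾.mul l (𝔾.inv g)) g = l := by
  rw [𝔾.mul_assoc' l (𝔾.inv g) g (by rw [hlg, 𝔾.r_inv]) (𝔾.d_inv g), 𝔾.inv_mul, ← hlg,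
    𝔾.mul_d]

theorem sum_filter_comp_mul_right [Fintype G] [DecidableEq G] {M : Type*} [AddCommMonoid M]
    (F : G → M) (g : G) :
    ∑ h ∈ univ.filter (fun h => 𝔾.d h = 𝔾.r g), F (𝔾.mul h g) =
      ∑ l ∈ univ.filter (fun l => 𝔾.d l = 𝔾.d g), F l := by
  refine sum_nbij' (𝔾.mul · g) (𝔾.mul · (𝔾.inv g)) ?_ ?_ ?_ ?_ fun _ _ => rfl <;>
    simp only [mem_filter, mem_univ, true_and]
  · exact fun h hh => 𝔾.d_mul h g hh
  · exact fun l hl => by rw [𝔾.d_mul l (𝔾.inv g) (by rw [hl, 𝔾.r_inv]), 𝔾.d_inv]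
  · exact fun h hh => 𝔾.mul_mul_inv_cancel hh
  · exact fun l hl => 𝔾.mul_inv_mul_cancel hl

end AlgGroupoid

namespace IsIdentityElem

variable {T : Type u} [NonUnitalRing T]

theorem mul_mem_inter {a b : T} {A B : Set T} (ha : IsIdentityElem a A)
    (hb : IsIdentityElem b B) (hab : a * b ∈ A ∩ B) : IsIdentityElem (a * b) (A ∩ B) := by
  refine ⟨hab, fun x hx => ⟨?_, ?_⟩⟩
  · rw [mul_assoc, (hb.2 x hx.2).1, (ha.2 x hx.1).1]
  · rw [← mul_assoc, (ha.2 x hx.1).2, (hb.2 x hx.2).2]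

theorem map_eq {φ : T → T} {S : Set T} (hφ : ∀ x ∈ S, ∀ y ∈ S, φ (x * y) = φ x * φ y)
    {e f : T} (he : IsIdentityElem e S) (hf : IsIdentityElem f (φ '' S)) : φ e = f := by
  obtain ⟨s, hs, rfl⟩ := hf.1
  calc φ e = φ e * φ s := ((hf.2 _ ⟨e, he.1, rfl⟩).2).symm
    _ = φ s := by rw [← hφ e he.1 s hs, (he.2 s hs).1]

end IsIdentityElem

namespace PartialGroupoidAction

variable {G : Type u} {𝔾 : AlgGroupoid G} {R : Type u} [Ring R]
  (α : PartialGroupoidAction 𝔾 R Set.univ)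

theorem act_zero (g : G) : α.act g 0 = 0 := by
  have h0 : (0 : R) ∈ α.D (𝔾.inv g) := (α.ideal (𝔾.inv g)).zero_mem
  simpa using α.map_add g 0 h0 0 h0

theorem D_inv_subset_D_d (g : G) : α.D (𝔾.inv g) ⊆ α.D (𝔾.d g) := by
  simpa only [𝔾.r_inv] using (α.ideal (𝔾.inv g)).subset

theorem act_act_inv {k : G} {z : R} (hz : z ∈ α.D k) : α.act k (α.act (𝔾.inv k) z) = z := by
  have hz' : z ∈ α.D (𝔾.inv (𝔾.inv k)) := by rwa [𝔾.inv_inv]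
  rw [α.comp_cond k (𝔾.inv k) (𝔾.r_inv k).symm z hz' ((α.bijOn _).mapsTo hz'), 𝔾.mul_inv]
  exact α.act_id (𝔾.r k) (𝔾.d_r k) z ((α.ideal k).subset hz)

theorem act_inv_act {k : G} {z : R} (hz : z ∈ α.D (𝔾.inv k)) :
    α.act (𝔾.inv k) (α.act k z) = z := by
  simpa only [𝔾.inv_inv] using α.act_act_inv hz

theorem act_mem_D_inv_iff {g h : G} (hgh : 𝔾.d h = 𝔾.r g) {z : R} (hz : z ∈ α.D (𝔾.inv g)) :
    α.act g z ∈ α.D (𝔾.inv h) ↔ z ∈ α.D (𝔾.inv (𝔾.mul h g)) := by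
  refine ⟨α.dom_cond h g hgh z hz, fun hzl => ?_⟩
  have hgz : α.act g z ∈ α.D (𝔾.inv (𝔾.inv g)) := by
    rw [𝔾.inv_inv]; exact (α.bijOn g).mapsTo hz
  have := α.dom_cond (𝔾.mul h g) (𝔾.inv g) (by rw [𝔾.d_mul h g hgh, 𝔾.r_inv]) _ hgz
    (by rwa [α.act_inv_act hz])
  rwa [𝔾.mul_mul_inv_cancel hgh] at this

theorem image_act_inter {g h : G} (hgh : 𝔾.d h = 𝔾.r g) :
    α.act g '' (α.D (𝔾.inv g) ∩ α.D (𝔾.inv (𝔾.mul h g))) = α.D g ∩ α.D (𝔾.inv h) := by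
  ext y
  constructor
  · rintro ⟨z, ⟨hz, hzl⟩, rfl⟩
    exact ⟨(α.bijOn g).mapsTo hz, (α.act_mem_D_inv_iff hgh hz).2 hzl⟩
  · rintro ⟨hyg, hyh⟩
    obtain ⟨z, hz, rfl⟩ := (α.bijOn g).surjOn hyg
    exact ⟨z, ⟨hz, (α.act_mem_D_inv_iff hgh hz).1 hyh⟩, rfl⟩

variable {one : G → R}

theorem mul_mem_D_of_left (hone : ∀ g, IsIdentityElem (one g) (α.D g)) {g : G} {x : R}
    (hx : x ∈ α.D g) (y : R) : x * y ∈ α.D g := by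
  rw [← ((hone g).2 x hx).2, mul_assoc]
  exact (α.ideal g).mul_mem_right hx
    ((α.ideal_r g).mul_mem_right ((α.ideal g).subset (hone g).1) trivial)

theorem mul_mem_D_of_right (hone : ∀ g, IsIdentityElem (one g) (α.D g)) {g : G} {y : R}
    (hy : y ∈ α.D g) (x : R) : x * y ∈ α.D g := by
  rw [← ((hone g).2 y hy).1, ← mul_assoc]
  exact (α.ideal g).mul_mem_left
    ((α.ideal_r g).mul_mem_left trivial ((α.ideal g).subset (hone g).1)) hy

theorem isIdentityElem_inter (hone : ∀ g, IsIdentityElem (one g) (α.D g)) (a b : G) :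
    IsIdentityElem (one a * one b) (α.D a ∩ α.D b) :=
  (hone a).mul_mem_inter (hone b)
    ⟨α.mul_mem_D_of_left hone (hone a).1 _, α.mul_mem_D_of_right hone (hone b).1 _⟩

theorem act_one_mul_one (hone : ∀ g, IsIdentityElem (one g) (α.D g)) {g h : G}
    (hgh : 𝔾.d h = 𝔾.r g) :
    α.act g (one (𝔾.inv g) * one (𝔾.inv (𝔾.mul h g))) = one g * one (𝔾.inv h) := by
  refine IsIdentityElem.map_eq (fun x hx y hy => α.map_mul g x hx.1 y hy.1)
    (α.isIdentityElem_inter hone _ _) ?_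
  rw [α.image_act_inter hgh]
  exact α.isIdentityElem_inter hone _ _

theorem act_act_mul_one (hone : ∀ g, IsIdentityElem (one g) (α.D g)) {g h : G}
    (hgh : 𝔾.d h = 𝔾.r g) {x : R} (hx : x ∈ α.D (𝔾.inv g)) :
    α.act h (α.act g x * one (𝔾.inv h)) =
      α.act (𝔾.mul h g) (x * one (𝔾.inv (𝔾.mul h g))) := by
  set l := 𝔾.inv (𝔾.mul h g)
  have hxl : x * one l ∈ α.D (𝔾.inv g) := α.mul_mem_D_of_left hone hx _
  have hshift : α.act g x * one (𝔾.inv h) = α.act g (x * one l) := by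
    calc α.act g x * one (𝔾.inv h) = α.act g x * (one g * one (𝔾.inv h)) := by
          rw [← mul_assoc, ((hone g).2 _ ((α.bijOn g).mapsTo hx)).2]
      _ = α.act g (x * (one (𝔾.inv g) * one l)) := by
          rw [← α.act_one_mul_one hone hgh,
            α.map_mul g _ hx _ (α.mul_mem_D_of_left hone (hone _).1 _)]
      _ = α.act g (x * one l) := by rw [← mul_assoc, ((hone _).2 x hx).2]
  have hmem : α.act g (x * one l) ∈ α.D (𝔾.inv h) := by
    rw [← hshift]
    exact α.mul_mem_D_of_right hone (hone _).1 _
  rw [hshift, α.comp_cond h g hgh _ hxl hmem]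

theorem act_mul_one_eq_zero (hone : ∀ g, IsIdentityElem (one g) (α.D g))
    (horth : ∀ e f, 𝔾.isId e → 𝔾.isId f → e ≠ f → ∀ x ∈ α.D e, ∀ y ∈ α.D f, x * y = 0)
    {e h : G} (he : 𝔾.isId e) (hne : 𝔾.d h ≠ e) {y : R} (hy : y ∈ α.D e) :
    α.act h (y * one (𝔾.inv h)) = 0 := by
  rw [horth e (𝔾.d h) he (𝔾.d_d h) (Ne.symm hne) y hy _
    (α.D_inv_subset_D_d h (hone _).1), α.act_zero]

end PartialGroupoidAction

theorem traceMap_act_eq_general {G : Type u} [Fintype G]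
    (𝔾 : AlgGroupoid G) {R : Type u} [Ring R]
    (α : PartialGroupoidAction 𝔾 R (Set.univ : Set R))
    (one : G → R) (hone : ∀ g, IsIdentityElem (one g) (α.D g))
    (horth : ∀ e f, 𝔾.isId e → 𝔾.isId f → e ≠ f → ∀ x ∈ α.D e, ∀ y ∈ α.D f, x * y = 0) :
    ∀ g : G, ∀ x ∈ α.D (𝔾.inv g), traceMap 𝔾 α one (α.act g x) = traceMap 𝔾 α one x := by
  classical
  intro g x hx
  have hgx : α.act g x ∈ α.D (𝔾.r g) := (α.ideal g).subset ((α.bijOn g).mapsTo hx)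
  calc traceMap 𝔾 α one (α.act g x)
      = ∑ h ∈ univ.filter (fun h => 𝔾.d h = 𝔾.r g), α.act h (α.act g x * one (𝔾.inv h)) :=
        (sum_filter_of_ne fun h _ => not_imp_comm.1
          (α.act_mul_one_eq_zero hone horth (𝔾.d_r g) · hgx)).symm
    _ = ∑ h ∈ univ.filter (fun h => 𝔾.d h = 𝔾.r g),
          α.act (𝔾.mul h g) (x * one (𝔾.inv (𝔾.mul h g))) :=
        sum_congr rfl fun h hh => α.act_act_mul_one hone (mem_filter.1 hh).2 hx
    _ = ∑ l ∈ univ.filter (fun l => 𝔾.d l = 𝔾.d g), α.act l (x * one (𝔾.inv l)) :=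
        𝔾.sum_filter_comp_mul_right (fun l => α.act l (x * one (𝔾.inv l))) g
    _ = traceMap 𝔾 α one x :=
        sum_filter_of_ne fun l _ => not_imp_comm.1
          (α.act_mul_one_eq_zero hone horth (𝔾.d_d g) · (α.D_inv_subset_D_d g hx))

/-- **Lemma 4.2(ii)**: under the standing hypotheses,
`t_α(α_g(x)) = t_α(x)` for every `g ∈ G` and every `x ∈ D_{g⁻¹}`. -/
theorem traceMap_act_eq {G : Type u} [Nonempty G] [Fintype G]
    [DecidableEq G] (𝔾 : AlgGroupoid G) {R : Type u} [Ring R]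
    (α : PartialGroupoidAction 𝔾 R (Set.univ : Set R))
    (one : G → R) (hone : ∀ g, IsIdentityElem (one g) (α.D g))
    (hcentral : ∀ g (x : R), one g * x = x * one g)
    (horth : ∀ e f, 𝔾.isId e → 𝔾.isId f → e ≠ f → ∀ x ∈ α.D e, ∀ y ∈ α.D f, x * y = 0)
    (hunit : (1 : R) = ∑ e ∈ Finset.univ.filter (fun e => 𝔾.isId e), one e) :
    ∀ g : G, ∀ x ∈ α.D (𝔾.inv g), traceMap 𝔾 α one (α.act g x) = traceMap 𝔾 α one x :=
  traceMap_act_eq_general 𝔾 α one hone horth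
end
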